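/- arXiv:2604.17150 — 7 statements merged into one kernel-verified Lean document; each statement's English description precedes it below -/
import Mathlib

section
/- Define J₀(ω̃) = Γ(1 − 2ω̃²) · cos(π ω̃²) · ω̃^{2ω̃² − 1} for 0 < ω̃ < 1/2. Then, as ω̃ → 0⁺, J₀(ω̃) = 1/ω̃ + 2 ω̃ log ω̃ + 2 γ ω̃ + O(ω̃³ log² ω̃); that is, the function ω̃ ↦ J₀(ω̃) − 1/ω̃ − 2 ω̃ log ω̃ − 2 γ ω̃ is O(ω̃³ log² ω̃) as ω̃ → 0⁺. -/
open Real Filter Asymptotics Topology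

/-! Since `ω ^ (2ω² - 1) = exp u / ω` with `u = 2ω² log ω → 0`, it suffices to show that
`Γ(1 - 2ω²) cos(πω²) exp u = (1 + 2γω²)(1 + u) + O(ω⁴ log² ω)`. This follows from the
second-order Taylor expansions `Γ(1 + t) = 1 - γt + O(t²)`, `cos t = 1 + O(t²)` and
`exp u = 1 + u + O(u²)` of analytic functions, since `ω⁴ = O(ω⁴ log² ω)` and
`u² = 4ω⁴ log² ω`. -/

theorem AnalyticAt.isBigO_sub_sub_smul_deriv {𝕜 E : Type*} [NontriviallyNormedField 𝕜]
    [NormedAddCommGroup E] [NormedSpace 𝕜 E] {f : 𝕜 → E} {x : 𝕜} (hf : AnalyticAt 𝕜 f x) :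
    (fun t => f (x + t) - f x - t • deriv f x) =O[𝓝 0] fun t => t ^ 2 := by
  obtain ⟨p, hp⟩ := hf
  have hcoeff₀ : p.coeff 0 = f x := hp.coeff_zero 1
  have hsum (t : 𝕜) : p.partialSum 2 t = f x + t • deriv f x := by
    simp [FormalMultilinearSeries.partialSum, Finset.sum_range_succ, hp.deriv, hcoeff₀]
  refine IsBigO.of_norm_right ?_
  simpa [hsum, sub_sub, norm_pow] using hp.isBigO_sub_partialSum_pow 2

theorem Real.analyticAt_Gamma {x : ℝ} (hx : 0 < x) : AnalyticAt ℝ Gamma x := by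
  have hU : IsOpen {z : ℂ | 0 < z.re} := isOpen_lt continuous_const Complex.continuous_re
  have hdiff : DifferentiableOn ℂ Complex.Gamma {z : ℂ | 0 < z.re} := fun z hz =>
    (Complex.differentiableAt_Gamma z fun m hm => by
      simp only [hm, Set.mem_ofPred_eq, Complex.neg_re, Complex.natCast_re] at hz
      linarith [m.cast_nonneg (α := ℝ)]).differentiableWithinAt
  have hC : AnalyticAt ℝ Complex.Gamma (Complex.ofRealCLM x) :=
    (hdiff.analyticAt (hU.mem_nhds (by simpa using hx))).restrictScalars
  refine ((Complex.reCLM.analyticAt _).comp (hC.comp (Complex.ofRealCLM.analyticAt x))).congr ?_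
  filter_upwards with y
  simp [Complex.Gamma_ofReal]

theorem Real.isBigO_Gamma_one_add_sub :
    (fun t : ℝ => Gamma (1 + t) - (1 - eulerMascheroniConstant * t)) =O[𝓝 0] fun t => t ^ 2 := by
  refine ((analyticAt_Gamma one_pos).isBigO_sub_sub_smul_deriv).congr_left fun t => ?_
  simp only [hasDerivAt_Gamma_one.deriv, Gamma_one, smul_eq_mul]
  ring

theorem Real.isBigO_cos_sub_one : (fun t : ℝ => cos t - 1) =O[𝓝 0] fun t => t ^ 2 := by
  simpa using (analyticAt_cos (x := 0)).isBigO_sub_sub_smul_deriv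

theorem Real.isBigO_exp_sub_one_add : (fun t : ℝ => exp t - (1 + t)) =O[𝓝 0] fun t => t ^ 2 := by
  simpa [sub_sub] using (analyticAt_rexp (x := 0)).isBigO_sub_sub_smul_deriv

theorem Asymptotics.IsBigO.mul_sub_mul {α R : Type*} [SeminormedRing R] {l : Filter α}
    {f₁ f₂ g₁ g₂ : α → R} {h : α → ℝ} (h₁ : (fun x => f₁ x - g₁ x) =O[l] h)
    (h₂ : (fun x => f₂ x - g₂ x) =O[l] h) (hf₁ : f₁ =O[l] fun _ => (1 : ℝ))
    (hg₂ : g₂ =O[l] fun _ => (1 : ℝ)) :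
    (fun x => f₁ x * f₂ x - g₁ x * g₂ x) =O[l] h := by
  have := ((hf₁.mul h₂).congr_right fun x => one_mul (h x)).add
    ((h₁.mul hg₂).congr_right fun x => mul_one (h x))
  refine this.congr_left fun x => ?_
  noncomm_ring

theorem Real.isBigO_one_log_nhdsGT_zero : (fun _ => (1 : ℝ)) =O[𝓝[>] 0] log :=
  ((isLittleO_one_left_iff ℝ).2 (tendsto_abs_atBot_atTop.comp tendsto_log_nhdsGT_zero)).isBigO

theorem Real.isBigO_log_pow_log_pow_nhdsGT_zero {m n : ℕ} (hmn : m ≤ n) :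
    (fun x => log x ^ m) =O[𝓝[>] 0] fun x => log x ^ n := by
  obtain ⟨k, rfl⟩ := Nat.exists_eq_add_of_le hmn
  refine ((isBigO_refl (fun x => log x ^ m) _).mul (isBigO_one_log_nhdsGT_zero.pow k)).congr
    (fun x => by rw [one_pow, mul_one]) fun x => (pow_add _ _ _).symm

theorem isBigO_Gamma_mul_cos_mul_exp_sub :
    (fun ω : ℝ => Gamma (1 - 2 * ω ^ 2) * cos (π * ω ^ 2) * exp (2 * ω ^ 2 * log ω)
        - (1 + 2 * eulerMascheroniConstant * ω ^ 2) * (1 + 2 * ω ^ 2 * log ω))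
      =O[𝓝[>] 0] fun ω => ω ^ 4 * log ω ^ 2 := by
  have hsq : Tendsto (fun ω : ℝ => ω ^ 2) (𝓝[>] 0) (𝓝 0) := by
    simpa using ((continuous_pow 2).tendsto (0 : ℝ)).mono_left nhdsWithin_le_nhds
  have hu : Tendsto (fun ω => 2 * ω ^ 2 * log ω) (𝓝[>] 0) (𝓝 0) := by
    have := (tendsto_log_mul_rpow_nhdsGT_zero two_pos).const_mul 2
    simp only [rpow_two, mul_zero] at this
    exact this.congr fun ω => by ring
  have hω₄ : (fun ω : ℝ => ω ^ 4) =O[𝓝[>] 0] fun ω => ω ^ 4 * log ω ^ 2 :=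
    ((isBigO_refl (fun ω : ℝ => ω ^ 4) _).mul (isBigO_log_pow_log_pow_nhdsGT_zero
      zero_le_two)).congr_left fun ω => by rw [pow_zero, mul_one]
  have hGamma : (fun ω => Gamma (1 - 2 * ω ^ 2) - (1 + 2 * eulerMascheroniConstant * ω ^ 2))
      =O[𝓝[>] 0] fun ω => ω ^ 4 * log ω ^ 2 := by
    have hk : Tendsto (fun ω : ℝ => -2 * ω ^ 2) (𝓝[>] 0) (𝓝 0) := by
      simpa using hsq.const_mul (-2)
    refine ((isBigO_Gamma_one_add_sub.comp_tendsto hk).trans ?_).congr_left fun ω => ?_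
    · exact ((isBigO_const_mul_self 4 _ _).congr_left fun ω => by
        simp only [Function.comp_apply]; ring).trans hω₄
    · simp only [Function.comp_apply, neg_mul, ← sub_eq_add_neg]
      ring
  have hcos : (fun ω => cos (π * ω ^ 2) - 1) =O[𝓝[>] 0] fun ω => ω ^ 4 * log ω ^ 2 :=
    (isBigO_cos_sub_one.comp_tendsto (by simpa using hsq.const_mul π)).trans
      (((isBigO_const_mul_self (π ^ 2) _ _).congr_left fun ω => by
        simp only [Function.comp_apply]; ring).trans hω₄)
  have hexp : (fun ω => exp (2 * ω ^ 2 * log ω) - (1 + 2 * ω ^ 2 * log ω))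
      =O[𝓝[>] 0] fun ω => ω ^ 4 * log ω ^ 2 :=
    (isBigO_exp_sub_one_add.comp_tendsto hu).trans
      ((isBigO_const_mul_self 4 _ _).congr_left fun ω => by simp only [Function.comp_apply]; ring)
  have hGamma_bdd : (fun ω => Gamma (1 - 2 * ω ^ 2)) =O[𝓝[>] 0] fun _ => (1 : ℝ) :=
    (hasDerivAt_Gamma_one.continuousAt.tendsto.comp
      (by simpa using (hsq.const_mul 2).const_sub 1)).isBigO_one ℝ
  have hcos_bdd : (fun ω => cos (π * ω ^ 2)) =O[𝓝[>] 0] fun _ => (1 : ℝ) :=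
    (isBigO_one_iff ℝ).2 ⟨1, eventually_map.2 (Eventually.of_forall fun ω => abs_cos_le_one _)⟩
  have h₁ := hGamma.mul_sub_mul hcos hGamma_bdd (isBigO_refl _ _)
  have h₂ := h₁.mul_sub_mul hexp ((hGamma_bdd.mul hcos_bdd).congr_right fun _ => mul_one 1)
    ((tendsto_const_nhds.add hu).isBigO_one ℝ)
  simpa only [mul_one] using h₂

/-- With `J₀(ω̃) = Γ(1 − 2ω̃²) · cos(π ω̃²) · ω̃^{2ω̃² − 1}`, as `ω̃ → 0⁺`,
`J₀(ω̃) − 1/ω̃ − 2 ω̃ log ω̃ − 2 γ ω̃ = O(ω̃³ log² ω̃)`. -/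
theorem stmt_1 :
    (fun ω : ℝ =>
        Real.Gamma (1 - 2 * ω ^ 2) * Real.cos (π * ω ^ 2) * ω ^ (2 * ω ^ 2 - 1)
          - 1 / ω - 2 * ω * Real.log ω - 2 * Real.eulerMascheroniConstant * ω)
      =O[nhdsWithin 0 (Set.Ioi 0)]
      fun ω : ℝ => ω ^ 3 * Real.log ω ^ 2 := by
  have hpos : ∀ᶠ ω in 𝓝[>] (0 : ℝ), 0 < ω := self_mem_nhdsWithin
  have hmain : (fun ω : ℝ => ω⁻¹ * (Gamma (1 - 2 * ω ^ 2) * cos (π * ω ^ 2) *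
      exp (2 * ω ^ 2 * log ω) - (1 + 2 * eulerMascheroniConstant * ω ^ 2) *
      (1 + 2 * ω ^ 2 * log ω))) =O[𝓝[>] 0] fun ω => ω ^ 3 * log ω ^ 2 := by
    refine ((isBigO_refl (fun ω : ℝ => ω⁻¹) _).mul isBigO_Gamma_mul_cos_mul_exp_sub).congr'
      .rfl ?_
    filter_upwards [hpos] with ω hω
    field_simp
  -- the cross term `2γω² · 2ω² log ω / ω` of `(1 + 2γω²)(1 + 2ω² log ω) / ω`
  have hcross : (fun ω : ℝ => 4 * eulerMascheroniConstant * (ω ^ 3 * log ω))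
      =O[𝓝[>] 0] fun ω => ω ^ 3 * log ω ^ 2 :=
    ((isBigO_refl (fun ω : ℝ => ω ^ 3) _).mul (isBigO_log_pow_log_pow_nhdsGT_zero
      one_le_two)).const_mul_left _ |>.congr_left fun ω => by rw [pow_one]
  refine (hmain.add hcross).congr' ?_ .rfl
  filter_upwards [hpos] with ω hω
  rw [rpow_sub_one hω.ne', rpow_def_of_pos hω]
  field_simp
  ring
end

section
/- Fix a real a > 0 and define L₀(ω̃) = i · e^{-i π a² ω̃² / 2} · ω̃^{a² ω̃² − 1} · Γ(1 − a² ω̃²) for 0 < ω̃ < 1/a. Then, as ω̃ → 0⁺, L₀(ω̃) − i/ω̃ = O(ω̃ log ω̃); in particular ω̃ · L₀(ω̃) → i as ω̃ → 0⁺. -/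
/-! `ω L₀(ω) = i · exp (a²ω² (log ω - iπ/2)) · Γ(1 - a²ω²)`. Both factors are differentiable
functions, at `0`, of arguments that are `O(ω² log ω)` (the exponent because `log ω` swamps the
constant `iπ/2`), so each factor, and hence their product, is `1 + O(ω² log ω)`. Dividing by `ω`
gives the estimate, and `ω² log ω → 0` gives the limit. -/

open Real Filter Asymptotics Topology
open scoped Complex

theorem DifferentiableAt.isBigO_comp_sub_of_isBigO {α 𝕜 F : Type*} [NontriviallyNormedField 𝕜]
    [NormedAddCommGroup F] [NormedSpace 𝕜 F] {l : Filter α} {f : 𝕜 → F} {u : α → 𝕜}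
    {g : α → ℝ} (hf : DifferentiableAt 𝕜 f 0) (hu : u =O[l] g) (hg : Tendsto g l (𝓝 0)) :
    (fun x => f (u x) - f 0) =O[l] g :=
  (hf.isBigO_sub.comp_tendsto (hu.trans_tendsto hg)).trans
    (by simpa [Function.comp_def] using hu)

theorem Asymptotics.IsBigO.mul_sub_one {α R : Type*} [NormedRing R] {l : Filter α}
    {f₁ f₂ : α → R} {g : α → ℝ} (h₁ : (fun x => f₁ x - 1) =O[l] g)
    (h₂ : (fun x => f₂ x - 1) =O[l] g) (hg : Tendsto g l (𝓝 0)) :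
    (fun x => f₁ x * f₂ x - 1) =O[l] g := by
  have hf₁ : f₁ =O[l] (fun _ => (1 : ℝ)) :=
    (tendsto_sub_nhds_zero_iff.1 (h₁.trans_tendsto hg)).isBigO_one ℝ
  exact (((hf₁.mul h₂).congr_right fun x => one_mul (g x)).add h₁).congr_left fun x => by
    noncomm_ring

theorem isLittleO_const_log_nhdsGT_zero {E : Type*} [NormedAddCommGroup E] (c : E) :
    (fun _ => c) =o[𝓝[>] (0 : ℝ)] log :=
  isLittleO_const_left.2 <| Or.inr <| tendsto_abs_atBot_atTop.comp tendsto_log_nhdsGT_zero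

theorem isBigO_ofReal_log_sub_const_nhdsGT_zero (c : ℂ) :
    (fun x : ℝ => (log x : ℂ) - c) =O[𝓝[>] 0] log :=
  (Complex.isBigO_ofReal_left.2 (isBigO_refl _ _)).sub (isLittleO_const_log_nhdsGT_zero c).isBigO

theorem isBigO_sq_sq_mul_log_nhdsGT_zero :
    (fun x : ℝ => x ^ 2) =O[𝓝[>] 0] fun x => x ^ 2 * log x := by
  simpa using
    (isBigO_refl (fun x : ℝ => x ^ 2) _).mul (isLittleO_const_log_nhdsGT_zero (1 : ℝ)).isBigO

theorem tendsto_sq_mul_log_nhdsGT_zero :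
    Tendsto (fun x : ℝ => x ^ 2 * log x) (𝓝[>] 0) (𝓝 0) := by
  simpa [mul_comm] using tendsto_log_mul_rpow_nhdsGT_zero two_pos

theorem ofReal_mul_cexp_mul_rpow_sub_one {x : ℝ} (hx : 0 < x) (u : ℝ) :
    (x : ℂ) * (cexp (-Complex.I * π * (u : ℂ) / 2) * ((x ^ (u - 1) : ℝ) : ℂ))
      = cexp (u * ((log x : ℂ) - Complex.I * π / 2)) := by
  rw [rpow_sub hx, rpow_one, rpow_def_of_pos hx]
  push_cast
  have hx' : (x : ℂ) ≠ 0 := by exact_mod_cast hx.ne'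
  field_simp
  rw [← Complex.exp_add]
  ring_nf

theorem isBigO_sub_div_of_isBigO_mul_sub {f : ℝ → ℂ} {c : ℂ} {g : ℝ → ℝ}
    (h : (fun x => x * f x - c) =O[𝓝[>] 0] fun x => x * g x) :
    (fun x => f x - c / x) =O[𝓝[>] 0] g := by
  have hinv : (fun x : ℝ => (x : ℂ)⁻¹) =O[𝓝[>] 0] fun x => x⁻¹ :=
    (Complex.isBigO_ofReal_left.2 (isBigO_refl _ _)).congr_left fun x => Complex.ofReal_inv x
  have hdiv := h.mul hinv
  refine hdiv.congr' ?_ ?_ <;> filter_upwards [self_mem_nhdsWithin] with x (hx : 0 < x)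
  · have hx' : (x : ℂ) ≠ 0 := by exact_mod_cast hx.ne'
    field_simp
  · field_simp

theorem Complex.differentiableAt_Gamma_one_sub : DifferentiableAt ℂ (fun t => Gamma (1 - t)) 0 :=
  DifferentiableAt.comp (g := Gamma) 0 (by simpa using differentiableAt_Gamma_one)
    ((differentiableAt_const _).sub differentiableAt_id)

/-- Fix `a > 0` and set
`L₀(ω̃) = i · e^{-iπa²ω̃²/2} · ω̃^{a²ω̃²−1} · Γ(1 − a²ω̃²)` for `0 < ω̃ < 1/a`. Then, as
`ω̃ → 0⁺`, `L₀(ω̃) − i/ω̃ = O(ω̃ log ω̃)`; in particular `ω̃ · L₀(ω̃) → i` as `ω̃ → 0⁺`. -/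
theorem stmt_3 (a : ℝ) (ha : 0 < a)
    (L₀ : ℝ → ℂ)
    (hL₀ : ∀ ω : ℝ, 0 < ω → ω < 1 / a →
      L₀ ω = Complex.I * Complex.exp (-Complex.I * (π : ℂ) * ((a ^ 2 * ω ^ 2 : ℝ) : ℂ) / 2)
        * ((ω ^ (a ^ 2 * ω ^ 2 - 1) : ℝ) : ℂ) * ((Real.Gamma (1 - a ^ 2 * ω ^ 2) : ℝ) : ℂ)) :
    ((fun ω : ℝ => L₀ ω - Complex.I / (ω : ℂ))
        =O[nhdsWithin 0 (Set.Ioi 0)] fun ω : ℝ => ω * Real.log ω)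
    ∧ Tendsto (fun ω : ℝ => (ω : ℂ) * L₀ ω) (nhdsWithin 0 (Set.Ioi 0)) (nhds Complex.I) := by
  set w : ℝ → ℂ := fun ω => ((a ^ 2 * ω ^ 2 : ℝ) : ℂ)
  set R : ℝ → ℂ := fun ω =>
    cexp (w ω * ((log ω : ℂ) - Complex.I * π / 2)) * Complex.Gamma (1 - w ω)
  have hg := tendsto_sq_mul_log_nhdsGT_zero
  have hw : w =O[𝓝[>] 0] fun ω => ω ^ 2 :=
    Complex.isBigO_ofReal_left.2 (isBigO_const_mul_self _ _ _)
  have hexp := Complex.differentiable_exp.differentiableAt.isBigO_comp_sub_of_isBigO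
    (hw.mul (isBigO_ofReal_log_sub_const_nhdsGT_zero (Complex.I * π / 2))) hg
  have hGamma := Complex.differentiableAt_Gamma_one_sub.isBigO_comp_sub_of_isBigO
    (hw.trans isBigO_sq_sq_mul_log_nhdsGT_zero) hg
  simp only [Complex.exp_zero, sub_zero, Complex.Gamma_one] at hexp hGamma
  have hR : (fun ω => R ω - 1) =O[𝓝[>] 0] fun ω => ω ^ 2 * log ω := hexp.mul_sub_one hGamma hg
  have hL : ∀ᶠ ω : ℝ in 𝓝[>] 0, (ω : ℂ) * L₀ ω = Complex.I * R ω := by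
    filter_upwards [Ioo_mem_nhdsGT (one_div_pos.2 ha)] with ω ⟨hω, hωa⟩
    simp only [R, w]
    rw [hL₀ ω hω hωa, ← Complex.Gamma_ofReal, ← ofReal_mul_cexp_mul_rpow_sub_one hω]
    push_cast
    ring
  have hR₀ : Tendsto R (𝓝[>] 0) (𝓝 1) := tendsto_sub_nhds_zero_iff.1 (hR.trans_tendsto hg)
  constructor
  · refine isBigO_sub_div_of_isBigO_mul_sub ?_
    refine (hR.const_mul_left Complex.I).congr' ?_ (Eventually.of_forall fun ω => by ring)
    filter_upwards [hL] with ω hω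
    rw [hω]
    ring
  · simpa using (hR₀.const_mul Complex.I).congr' (hL.mono fun ω h => h.symm)
end

section
/- Let a > 0, M ≥ 0 be reals, g∞ ∈ ℝ, and let g : [1,∞) → ℝ be differentiable with g(λ) − g∞ = O((log λ)^M / λ) and g′(λ) = O((log λ)^M / λ²) as λ → ∞. Then for all sufficiently small ω̃ > 0 the improper integral T(ω̃) = ∫₁^∞ e^{i ω̃ λ} · λ^{-a² ω̃²} · (g(λ) − g∞) dλ (understood as lim_{T→∞} ∫₁^T) converges, and ω̃ · T(ω̃) → 0 as ω̃ → 0⁺; i.e., T(ω̃) = o(1/ω̃). -/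
/-!
Put `h = g - g∞` and `c = a²ω²`, and choose `L` beyond which `g' = O(λ^{-3/2})`, so that `g'` is
integrable on `(L, ∞)`. The integral over `(1, L]` is bounded uniformly in `ω`, so `ω` times it
tends to `0`. On `(L, ∞)`, integration by parts against `e^{iωλ}` turns `ω` times the integral into
`i (e^{iωL} L^{-c} h(L) + ∫_L^∞ e^{iωλ} (λ^{-c} h)'(λ) dλ)`, where `(λ^{-c} h)' = λ^{-c} (h' - c h/λ)`
is dominated by `|h'| + |h|/λ` once `c ≤ 1`. By dominated convergence this tends to
`i (h(L) + ∫_L^∞ h') = 0` as `ω → 0`.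
-/

open Real Filter Asymptotics MeasureTheory Set Topology
open scoped Complex
open Complex (I)

lemma isBigO_log_rpow_div_pow_atTop (M : ℝ) {s : ℝ} (hs : 0 < s) (n : ℕ) :
    (fun l : ℝ => log l ^ M / l ^ n) =O[atTop] fun l => l ^ (s - n) := by
  refine ((isLittleO_log_rpow_rpow_atTop M hs).isBigO.mul
    (isBigO_refl (fun l : ℝ => (l ^ n)⁻¹) atTop)).congr' (.of_forall fun l => rfl) ?_
  filter_upwards [eventually_gt_atTop 0] with l hl
  rw [rpow_sub hl, rpow_natCast, div_eq_mul_inv]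

lemma tendsto_zero_of_isBigO_log_rpow_div {E : Type*} [NormedAddCommGroup E] {f : ℝ → E}
    {M : ℝ} (hf : f =O[atTop] fun l => log l ^ M / l) : Tendsto f atTop (𝓝 0) :=
  (hf.trans ((isBigO_log_rpow_div_pow_atTop M one_half_pos 1).congr (fun l => by rw [pow_one])
    fun l => by norm_num)).trans_tendsto (tendsto_rpow_neg_atTop one_half_pos)

lemma integrableOn_Ioi_of_isBigO_rpow {E : Type*} [NormedAddCommGroup E] {f : ℝ → E} {a p : ℝ}
    (hf : ContinuousOn f (Ici a)) (hO : f =O[atTop] fun x => x ^ p) (hp : p < -1) :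
    IntegrableOn f (Ioi a) :=
  (integrableOn_Ici_iff_integrableAtFilter_atTop.2
    ⟨hO.integrableAtFilter ⟨Ici a, Ici_mem_atTop a, hf.aestronglyMeasurable measurableSet_Ici⟩
      (integrableAtFilter_rpow_atTop_iff.2 hp),
     hf.locallyIntegrableOn measurableSet_Ici⟩).mono_set Ioi_subset_Ici_self

lemma exists_integrableOn_Ioi_of_isBigO_rpow {E : Type*} [NormedAddCommGroup E] {f : ℝ → E}
    {p : ℝ} (hf : AEStronglyMeasurable f) (hO : f =O[atTop] fun x => x ^ p) (hp : p < -1)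
    (b : ℝ) : ∃ L, b < L ∧ IntegrableOn f (Ioi L) := by
  obtain ⟨s, hs, hs_int⟩ := hO.integrableAtFilter hf.stronglyMeasurableAtFilter
    (integrableAtFilter_rpow_atTop_iff.2 hp)
  obtain ⟨L, hL⟩ := mem_atTop_sets.1 hs
  exact ⟨max L b + 1, by linarith [le_max_right L b],
    hs_int.mono_set fun x hx => hL x (by linarith [le_max_left L b, mem_Ioi.1 hx])⟩

lemma norm_rpow_neg_le_one {c l : ℝ} (hc : 0 ≤ c) (hl : 1 ≤ l) : ‖l ^ (-c)‖ ≤ 1 := by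
  rw [Real.norm_of_nonneg (by positivity)]
  exact rpow_le_one_of_one_le_of_nonpos hl (neg_nonpos.2 hc)

lemma integrableOn_rpow_neg_mul_of_isBigO {h : ℝ → ℝ} {M c L : ℝ} (hL : 0 < L) (hc : 0 < c)
    (hh : ContinuousOn h (Ici L)) (hO : h =O[atTop] fun l => log l ^ M / l) :
    IntegrableOn (fun l => l ^ (-c) * h l) (Ioi L) := by
  refine integrableOn_Ioi_of_isBigO_rpow (p := -(c / 2) - 1)
    ((continuousOn_id.rpow_const fun x hx => Or.inl (hL.trans_le hx).ne').mul hh) ?_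
    (by linarith)
  have hO' : h =O[atTop] fun l => l ^ (c / 2 - 1) := hO.trans (by
    simpa only [pow_one, Nat.cast_one] using isBigO_log_rpow_div_pow_atTop M (half_pos hc) 1)
  refine ((isBigO_refl (fun l : ℝ => l ^ (-c)) atTop).mul hO').congr' (.of_forall fun l => rfl) ?_
  filter_upwards [eventually_gt_atTop 0] with l hl
  rw [← rpow_add hl]
  ring_nf

lemma hasDerivAt_rpow_neg_mul {h : ℝ → ℝ} {h' c x : ℝ} (hx : 0 < x) (hh : HasDerivAt h h' x) :
    HasDerivAt (fun l => l ^ (-c) * h l) (x ^ (-c) * (h' - c * (h x / x))) x :=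
  ((hasDerivAt_rpow_const (Or.inl hx.ne')).mul hh).congr_deriv
    (by rw [rpow_sub_one hx.ne']; ring)

lemma integrableOn_rpow_neg_mul_sub {h h' : ℝ → ℝ} {L c : ℝ} (hL : 1 ≤ L) (hc : 0 ≤ c)
    (hh : IntegrableOn (fun l => h l / l) (Ioi L)) (hh' : IntegrableOn h' (Ioi L)) :
    IntegrableOn (fun l => l ^ (-c) * (h' l - c * (h l / l))) (Ioi L) := by
  refine (hh'.sub (hh.const_mul c)).bdd_mul (c := 1) (by fun_prop) ?_
  filter_upwards [ae_restrict_mem measurableSet_Ioi] with l hl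
  exact norm_rpow_neg_le_one hc (hL.trans hl.le)

lemma norm_cexp_I_mul_mul (ω l : ℝ) : ‖cexp (I * ω * l)‖ = 1 := by
  rw [mul_assoc, ← Complex.ofReal_mul, Complex.norm_exp_I_mul_ofReal]

lemma MeasureTheory.Integrable.cexp_I_mul_mul {u : ℝ → ℂ} {μ : Measure ℝ}
    (hu : Integrable u μ) (ω : ℝ) : Integrable (fun l : ℝ => cexp (I * ω * l) * u l) μ :=
  hu.bdd_mul (by fun_prop) (c := 1) (.of_forall fun l : ℝ => (norm_cexp_I_mul_mul ω l).le)

lemma hasDerivAt_cexp_I_mul_mul (ω x : ℝ) :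
    HasDerivAt (fun l : ℝ => cexp (I * ω * l)) (I * ω * cexp (I * ω * x)) x := by
  simpa [mul_comm] using ((Complex.ofRealCLM.hasDerivAt (x := x)).const_mul (I * ω)).cexp

lemma mul_integral_Ioi_cexp_I_mul_mul {u u' : ℝ → ℂ} {L : ℝ}
    (hu : ∀ x ∈ Ici L, HasDerivAt u (u' x) x) (hu_int : IntegrableOn u (Ioi L))
    (hu'_int : IntegrableOn u' (Ioi L)) (hu_lim : Tendsto u atTop (𝓝 0)) (ω : ℝ) :
    ω * ∫ l in Ioi L, cexp (I * ω * l) * u l =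
      I * (cexp (I * ω * L) * u L + ∫ l in Ioi L, cexp (I * ω * l) * u' l) := by
  have hlim : Tendsto (fun l : ℝ => cexp (I * ω * l) * u l) atTop (𝓝 0) := by
    rw [tendsto_zero_iff_norm_tendsto_zero] at hu_lim ⊢
    simpa only [norm_mul, norm_cexp_I_mul_mul, one_mul] using hu_lim
  have hint := (hu_int.cexp_I_mul_mul ω).const_mul (I * ω)
  have hFTC := integral_Ioi_of_hasDerivAt_of_tendsto'
    (f' := fun x => I * ω * (cexp (I * ω * x) * u x) + cexp (I * ω * x) * u' x)
    (fun x hx => ((hasDerivAt_cexp_I_mul_mul ω x).mul (hu x hx)).congr_deriv (by ring))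
    (hint.add (hu'_int.cexp_I_mul_mul ω)) hlim
  rw [integral_add hint (hu'_int.cexp_I_mul_mul ω), integral_const_mul, Pi.mul_apply,
    zero_sub] at hFTC
  linear_combination (-I) * hFTC + (ω * ∫ l in Ioi L, cexp (I * ω * l) * u l) * Complex.I_mul_I

lemma tendsto_integral_cexp_I_mul_mul_rpow_neg_mul_sub {h h' : ℝ → ℝ} {L : ℝ} (hL : 1 ≤ L)
    (a : ℝ) (hh : IntegrableOn (fun l => h l / l) (Ioi L)) (hh' : IntegrableOn h' (Ioi L)) :
    Tendsto (fun ω : ℝ => ∫ l in Ioi L,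
        cexp (I * ω * l) *
          ((l ^ (-(a ^ 2 * ω ^ 2)) * (h' l - a ^ 2 * ω ^ 2 * (h l / l)) : ℝ) : ℂ))
      (𝓝 0) (𝓝 (∫ l in Ioi L, (h' l : ℂ))) := by
  have hc : Tendsto (fun ω : ℝ => a ^ 2 * ω ^ 2) (𝓝 0) (𝓝 0) := by
    simpa using (show Continuous fun ω : ℝ => a ^ 2 * ω ^ 2 by fun_prop).tendsto 0
  refine tendsto_integral_filter_of_dominated_convergence (fun l => ‖h' l‖ + ‖h l / l‖)
    (.of_forall fun ω => ((integrableOn_rpow_neg_mul_sub hL (by positivity) hh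
      hh').ofReal.cexp_I_mul_mul ω).aestronglyMeasurable) ?_ (hh'.norm.add hh.norm) ?_
  · filter_upwards [hc.eventually (eventually_le_nhds one_pos)] with ω hω
    filter_upwards [ae_restrict_mem measurableSet_Ioi] with l hl
    rw [norm_mul, norm_cexp_I_mul_mul, one_mul, Complex.norm_real, norm_mul]
    refine (mul_le_of_le_one_left (norm_nonneg _)
      (norm_rpow_neg_le_one (by positivity) (hL.trans hl.le))).trans
      ((norm_sub_le _ _).trans (add_le_add le_rfl ?_))
    rw [norm_mul, Real.norm_of_nonneg (by positivity)]
    exact mul_le_of_le_one_left (norm_nonneg _) hω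
  · filter_upwards [ae_restrict_mem measurableSet_Ioi] with l hl
    have hl0 : 0 < l := zero_lt_one.trans_le (hL.trans hl.le)
    have hcont : Continuous fun ω : ℝ => cexp (I * ω * l) *
        ((l ^ (-(a ^ 2 * ω ^ 2)) * (h' l - a ^ 2 * ω ^ 2 * (h l / l)) : ℝ) : ℂ) := by
      fun_prop (disch := exact hl0.ne')
    simpa using hcont.tendsto 0

lemma tendsto_mul_integral_Ioi_cexp_I_mul_mul_rpow_neg_mul {h h' : ℝ → ℝ} {L : ℝ} (hL : 1 ≤ L)
    (a : ℝ) (hderiv : ∀ x ∈ Ici L, HasDerivAt h (h' x) x) (hh' : IntegrableOn h' (Ioi L))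
    (hh : IntegrableOn (fun l => h l / l) (Ioi L)) (hh_lim : Tendsto h atTop (𝓝 0))
    (hint : ∀ᶠ ω in 𝓝[>] 0, IntegrableOn (fun l => l ^ (-(a ^ 2 * ω ^ 2)) * h l) (Ioi L)) :
    Tendsto (fun ω : ℝ => ω * ∫ l in Ioi L,
        cexp (I * ω * l) * ((l ^ (-(a ^ 2 * ω ^ 2)) * h l : ℝ) : ℂ)) (𝓝[>] 0) (𝓝 0) := by
  have hboundary : Continuous fun ω : ℝ =>
      cexp (I * ω * L) * ((L ^ (-(a ^ 2 * ω ^ 2)) * h L : ℝ) : ℂ) := by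
    fun_prop (disch := exact (zero_lt_one.trans_le hL).ne')
  have hlim := ((hboundary.tendsto 0).add
    (tendsto_integral_cexp_I_mul_mul_rpow_neg_mul_sub hL a hh hh')).const_mul I
  have hvalue : I * (cexp (I * (0 : ℝ) * L) * ((L ^ (-(a ^ 2 * 0 ^ 2)) * h L : ℝ) : ℂ) +
      ∫ l in Ioi L, (h' l : ℂ)) = 0 := by
    rw [integral_complex_ofReal, integral_Ioi_of_hasDerivAt_of_tendsto' hderiv hh' hh_lim]
    simp
  rw [hvalue] at hlim
  refine (hlim.mono_left nhdsWithin_le_nhds).congr' ?_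
  filter_upwards [hint, self_mem_nhdsWithin] with ω hω_int (hω : 0 < ω)
  have hc : 0 ≤ a ^ 2 * ω ^ 2 := by positivity
  have hu_lim : Tendsto (fun l => l ^ (-(a ^ 2 * ω ^ 2)) * h l) atTop (𝓝 0) := by
    refine squeeze_zero_norm' ?_ (tendsto_zero_iff_norm_tendsto_zero.1 hh_lim)
    filter_upwards [eventually_ge_atTop 1] with l hl
    rw [norm_mul]
    exact mul_le_of_le_one_left (norm_nonneg _) (norm_rpow_neg_le_one hc hl)
  exact (mul_integral_Ioi_cexp_I_mul_mul
    (fun x hx => (hasDerivAt_rpow_neg_mul (zero_lt_one.trans_le (hL.trans hx))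
      (hderiv x hx)).ofReal_comp) hω_int.ofReal
    (integrableOn_rpow_neg_mul_sub hL hc hh hh').ofReal
    (by simpa [Function.comp_def] using (Complex.continuous_ofReal.tendsto 0).comp hu_lim) ω).symm

lemma tendsto_mul_integral_Ioc_cexp_I_mul_mul_rpow_neg_mul {h : ℝ → ℝ} {L : ℝ} (a : ℝ)
    (hh : ContinuousOn h (Icc 1 L)) :
    Tendsto (fun ω : ℝ => ω * ∫ l in Ioc 1 L,
        cexp (I * ω * l) * ((l ^ (-(a ^ 2 * ω ^ 2)) * h l : ℝ) : ℂ)) (𝓝 0) (𝓝 0) := by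
  obtain ⟨K, hK⟩ := isCompact_Icc.exists_bound_of_continuousOn hh
  refine Tendsto.zero_mul_isBoundedUnder_le (by simpa using Complex.continuous_ofReal.tendsto 0)
    ⟨K * volume.real (Ioc (1 : ℝ) L), eventually_map.2 (.of_forall fun ω => ?_)⟩
  refine norm_setIntegral_le_of_norm_le_const measure_Ioc_lt_top fun l hl => ?_
  rw [norm_mul, norm_cexp_I_mul_mul, one_mul, Complex.norm_real, norm_mul]
  exact (mul_le_of_le_one_left (norm_nonneg _) (norm_rpow_neg_le_one (by positivity) hl.1.le)).trans
    (hK l (Ioc_subset_Icc_self hl))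

lemma tendsto_mul_integral_Ioi_one_cexp_I_mul_mul_rpow_neg_mul {h h' : ℝ → ℝ} {L : ℝ}
    (hL : 1 ≤ L) (a : ℝ) (hh_cont : ContinuousOn h (Ici 1))
    (hderiv : ∀ x ∈ Ici L, HasDerivAt h (h' x) x) (hh' : IntegrableOn h' (Ioi L))
    (hh : IntegrableOn (fun l => h l / l) (Ioi L)) (hh_lim : Tendsto h atTop (𝓝 0))
    (hint : ∀ᶠ ω in 𝓝[>] 0, IntegrableOn (fun l => l ^ (-(a ^ 2 * ω ^ 2)) * h l) (Ioi 1)) :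
    Tendsto (fun ω : ℝ => ω * ∫ l in Ioi (1 : ℝ),
        cexp (I * ω * l) * ((l ^ (-(a ^ 2 * ω ^ 2)) * h l : ℝ) : ℂ)) (𝓝[>] 0) (𝓝 0) := by
  have hsum := ((tendsto_mul_integral_Ioc_cexp_I_mul_mul_rpow_neg_mul (L := L) a
    (hh_cont.mono Icc_subset_Ici_self)).mono_left nhdsWithin_le_nhds).add
    (tendsto_mul_integral_Ioi_cexp_I_mul_mul_rpow_neg_mul hL a hderiv hh' hh hh_lim
      (hint.mono fun ω hω => hω.mono_set (Ioi_subset_Ioi hL)))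
  rw [add_zero] at hsum
  refine hsum.congr' ?_
  filter_upwards [hint] with ω hω
  have hunion := setIntegral_union
    (f := fun l : ℝ => cexp (I * ω * l) * ((l ^ (-(a ^ 2 * ω ^ 2)) * h l : ℝ) : ℂ))
    (Ioc_disjoint_Ioi le_rfl) measurableSet_Ioi
    (IntegrableOn.mono_set (hω.ofReal.cexp_I_mul_mul ω) Ioc_subset_Ioi_self)
    (IntegrableOn.mono_set (hω.ofReal.cexp_I_mul_mul ω) (Ioi_subset_Ioi hL))
  rw [Ioc_union_Ioi_eq_Ioi hL] at hunion
  rw [hunion, mul_add]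

theorem stmt_6_general (a M ginf : ℝ) (ha : 0 < a)
    (g : ℝ → ℝ) (hdiff : DifferentiableOn ℝ g (Set.Ici 1))
    (hinf : (fun l : ℝ => g l - ginf) =O[atTop] fun l : ℝ => Real.log l ^ M / l)
    (hinf' : (fun l : ℝ => deriv g l) =O[atTop] fun l : ℝ => Real.log l ^ M / l ^ 2) :
    ∃ T : ℝ → ℂ,
      (∀ᶠ ω : ℝ in nhdsWithin (0 : ℝ) (Set.Ioi 0),
        Tendsto (fun R : ℝ => ∫ l in (1 : ℝ)..R,
            Complex.exp (Complex.I * (ω : ℂ) * (l : ℂ))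
              * ((l ^ (-(a ^ 2 * ω ^ 2)) : ℝ) : ℂ) * ((g l - ginf : ℝ) : ℂ))
          atTop (nhds (T ω)))
      ∧ Tendsto (fun ω : ℝ => (ω : ℂ) * T ω) (nhdsWithin 0 (Set.Ioi 0)) (nhds 0) := by
  set h : ℝ → ℝ := fun l => g l - ginf
  have hh_cont : ContinuousOn h (Ici 1) := hdiff.continuousOn.sub continuousOn_const
  have hint (c : ℝ) (hc : 0 < c) : IntegrableOn (fun l => l ^ (-c) * h l) (Ioi 1) :=
    integrableOn_rpow_neg_mul_of_isBigO one_pos hc hh_cont hinf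
  have hderiv_O : deriv g =O[atTop] fun l => l ^ (-(3 / 2) : ℝ) := hinf'.trans
    ((isBigO_log_rpow_div_pow_atTop M one_half_pos 2).congr_right fun l => by norm_num)
  obtain ⟨L, hL, hderiv_int⟩ := exists_integrableOn_Ioi_of_isBigO_rpow
    (measurable_deriv g).aestronglyMeasurable hderiv_O (by norm_num) 1
  have hderiv : ∀ x ∈ Ici L, HasDerivAt h (deriv g x) x := fun x hx =>
    ((hdiff.differentiableAt (Ici_mem_nhds (hL.trans_le hx))).hasDerivAt).sub_const ginf
  have hh_div : IntegrableOn (fun l => h l / l) (Ioi L) := by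
    simpa [rpow_neg_one, div_eq_inv_mul] using (hint 1 one_pos).mono_set (Ioi_subset_Ioi hL.le)
  have hint_ω : ∀ᶠ ω in 𝓝[>] 0, IntegrableOn (fun l => l ^ (-(a ^ 2 * ω ^ 2)) * h l) (Ioi 1) := by
    filter_upwards [self_mem_nhdsWithin] with ω (hω : 0 < ω) using hint _ (by positivity)
  have hF (ω l : ℝ) : cexp (I * ω * l) * ((l ^ (-(a ^ 2 * ω ^ 2)) : ℝ) : ℂ) *
      ((g l - ginf : ℝ) : ℂ) = cexp (I * ω * l) * ((l ^ (-(a ^ 2 * ω ^ 2)) * h l : ℝ) : ℂ) := by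
    rw [Complex.ofReal_mul, mul_assoc]
  simp_rw [hF]
  refine ⟨fun ω => ∫ l in Ioi (1 : ℝ), cexp (I * ω * l) * ((l ^ (-(a ^ 2 * ω ^ 2)) * h l : ℝ) : ℂ),
    ?_, tendsto_mul_integral_Ioi_one_cexp_I_mul_mul_rpow_neg_mul hL.le a hh_cont hderiv
      hderiv_int hh_div (tendsto_zero_of_isBigO_log_rpow_div hinf) hint_ω⟩
  filter_upwards [hint_ω] with ω hω
  exact intervalIntegral_tendsto_integral_Ioi 1 (hω.ofReal.cexp_I_mul_mul ω) tendsto_id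

/-- Let `a > 0`, `M ≥ 0`, `g∞ ∈ ℝ`, and `g : [1,∞) → ℝ` differentiable with
`g(λ) − g∞ = O((log λ)^M/λ)` and `g′(λ) = O((log λ)^M/λ²)` as `λ → ∞`. Then for all
sufficiently small `ω̃ > 0` the improper integral
`T(ω̃) = ∫₁^∞ e^{iω̃λ} λ^{-a²ω̃²} (g(λ) − g∞) dλ` converges, and `ω̃·T(ω̃) → 0`
as `ω̃ → 0⁺`. -/
theorem stmt_6 (a M ginf : ℝ) (ha : 0 < a) (hM : 0 ≤ M)
    (g : ℝ → ℝ) (hdiff : DifferentiableOn ℝ g (Set.Ici 1))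
    (hinf : (fun l : ℝ => g l - ginf) =O[atTop] fun l : ℝ => Real.log l ^ M / l)
    (hinf' : (fun l : ℝ => deriv g l) =O[atTop] fun l : ℝ => Real.log l ^ M / l ^ 2) :
    ∃ T : ℝ → ℂ,
      (∀ᶠ ω : ℝ in nhdsWithin (0 : ℝ) (Set.Ioi 0),
        Tendsto (fun R : ℝ => ∫ l in (1 : ℝ)..R,
            Complex.exp (Complex.I * (ω : ℂ) * (l : ℂ))
              * ((l ^ (-(a ^ 2 * ω ^ 2)) : ℝ) : ℂ) * ((g l - ginf : ℝ) : ℂ))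
          atTop (nhds (T ω)))
      ∧ Tendsto (fun ω : ℝ => (ω : ℂ) * T ω) (nhdsWithin 0 (Set.Ioi 0)) (nhds 0) :=
  stmt_6_general a M ginf ha g hdiff hinf hinf'
end

section
/- For every real ω with 0 ≤ ω ≤ 2π, the series ∑_{ℓ=1}^∞ sin(ℓ ω)/ℓ² converges and equals the Clausen function Cl₂(ω) = −∫₀^ω log(2 sin(t/2)) dt. -/
/-!
Abel summation. For `|r| < 1` the series `∑ rˡ cos(ℓt)/ℓ` is the real part of `-log(1 - r e^{it})`
and is dominated by `∑ |r|ˡ`, so it may be integrated termwise over `[0, ω]`: this gives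
`∑ rˡ sin(ℓω)/ℓ² = -∫₀^ω log|1 - r e^{it}| dt`. As `r → 1⁻` the left side tends to the Clausen
series by Tannery's theorem. On the right, for `0 ≤ r ≤ 1` the identity
`|1 - r e^{it}|² = (1-r)² + 4r sin²(t/2)` gives `|sin(t/2)| ≤ |1 - r e^{it}| ≤ 2`, so the integrands
are dominated by the integrable function `log 2 + |log|sin(t/2)||` and dominated convergence
applies; at `r = 1` the integrand is `log|2 sin(t/2)|`.
-/

open Real Filter MeasureTheory Set Topology

lemma hasSum_pow_mul_cos_div {r : ℝ} (hr : |r| < 1) (t : ℝ) :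
    HasSum (fun ℓ : ℕ => r ^ (ℓ + 1) * cos ((ℓ + 1) * t) / (ℓ + 1))
      (-log ‖1 - r * Complex.exp (t * Complex.I)‖) := by
  have hz : ‖(r : ℂ) * Complex.exp (t * Complex.I)‖ < 1 := by
    rwa [norm_mul, Complex.norm_real, Complex.norm_exp_ofReal_mul_I, mul_one]
  convert Complex.hasSum_re (Complex.hasSum_taylorSeries_neg_log' hz) using 1
  · ext ℓ
    rw [mul_pow, ← Complex.exp_nat_mul, ← mul_assoc]
    norm_cast
    rw [Complex.div_natCast_re, Complex.re_ofReal_mul, Complex.exp_ofReal_mul_I_re]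
  · simp [Complex.log_re]

lemma integral_cos_mul_of_ne_zero {c : ℝ} (hc : c ≠ 0) (ω : ℝ) :
    ∫ t in 0..ω, cos (c * t) = sin (c * ω) / c := by
  rw [intervalIntegral.integral_comp_mul_left _ hc, integral_cos]
  simp [div_eq_inv_mul]

lemma hasSum_pow_mul_sin_div_sq {r : ℝ} (hr : |r| < 1) (ω : ℝ) :
    HasSum (fun ℓ : ℕ => r ^ (ℓ + 1) * (sin ((ℓ + 1) * ω) / (ℓ + 1) ^ 2))
      (-∫ t in 0..ω, log ‖1 - r * Complex.exp (t * Complex.I)‖) := by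
  rw [← intervalIntegral.integral_neg]
  have hterm (ℓ : ℕ) : ∫ t in 0..ω, r ^ (ℓ + 1) * cos ((ℓ + 1) * t) / (ℓ + 1) =
      r ^ (ℓ + 1) * (sin ((ℓ + 1) * ω) / (ℓ + 1) ^ 2) := by
    rw [intervalIntegral.integral_div, intervalIntegral.integral_const_mul,
      integral_cos_mul_of_ne_zero (by positivity)]
    field_simp
  simp_rw [← hterm]
  refine intervalIntegral.hasSum_integral_of_dominated_convergence (fun ℓ _ => |r| ^ (ℓ + 1))
    (fun ℓ => by fun_prop) (fun ℓ => ae_of_all _ fun t _ => ?_)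
    (ae_of_all _ fun _ _ => (summable_geometric_of_lt_one (abs_nonneg r) hr).mul_left |r|
      |>.congr fun ℓ => (pow_succ' _ _).symm)
    intervalIntegrable_const (ae_of_all _ fun t _ => hasSum_pow_mul_cos_div hr t)
  rw [norm_div, norm_mul, norm_pow, Real.norm_eq_abs, Real.norm_eq_abs, Real.norm_eq_abs,
    abs_of_pos (by positivity : (0 : ℝ) < ℓ + 1)]
  calc |r| ^ (ℓ + 1) * |cos ((ℓ + 1) * t)| / (ℓ + 1) ≤ |r| ^ (ℓ + 1) * 1 / 1 := by
        gcongr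
        · exact abs_cos_le_one _
        · simp
    _ = |r| ^ (ℓ + 1) := by ring

lemma normSq_one_sub_mul_exp (r t : ℝ) :
    Complex.normSq (1 - r * Complex.exp (t * Complex.I)) =
      (1 - r) ^ 2 + 4 * r * sin (t / 2) ^ 2 := by
  have hcos : cos t = 1 - 2 * sin (t / 2) ^ 2 := by
    rw [← cos_two_mul_eq_one_sub, mul_div_cancel₀ _ two_ne_zero]
  rw [Complex.normSq_apply]
  simp only [Complex.sub_re, Complex.sub_im, Complex.one_re, Complex.one_im,
    Complex.re_ofReal_mul, Complex.im_ofReal_mul, Complex.exp_ofReal_mul_I_re,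
    Complex.exp_ofReal_mul_I_im]
  linear_combination r ^ 2 * sin_sq_add_cos_sq t - 2 * r * hcos

lemma abs_sin_half_le_norm_one_sub_mul_exp {r t : ℝ} (hr0 : 0 ≤ r) :
    |sin (t / 2)| ≤ ‖1 - r * Complex.exp (t * Complex.I)‖ := by
  rw [← sqrt_sq_eq_abs, Complex.norm_def, normSq_one_sub_mul_exp]
  gcongr
  -- `(1 - r)² + (4r - 1) s² ≥ 0`: clear if `4r ≥ 1`, else `s² ≤ 1` reduces it to `2r + r² ≥ 0`
  have hs0 := sq_nonneg (sin (t / 2))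
  have hs1 := sin_sq_le_one (t / 2)
  rcases le_total r (1 / 4) with hr | hr
  · nlinarith [mul_nonneg (sub_nonneg.2 hs1) (by linarith : 0 ≤ 1 - 4 * r)]
  · nlinarith [mul_nonneg hs0 (by linarith : 0 ≤ 4 * r - 1)]

lemma norm_one_sub_exp_mul_I (t : ℝ) :
    ‖1 - Complex.exp (t * Complex.I)‖ = |2 * sin (t / 2)| := by
  rw [norm_sub_rev, mul_comm, Complex.norm_exp_I_mul_ofReal_sub_one, Real.norm_eq_abs]

lemma abs_log_norm_one_sub_mul_exp_le {r t : ℝ} (hr0 : 0 ≤ r) (hr1 : r ≤ 1)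
    (ht : sin (t / 2) ≠ 0) :
    |log ‖1 - r * Complex.exp (t * Complex.I)‖| ≤ log 2 + |log (sin (t / 2))| := by
  have hlow := abs_sin_half_le_norm_one_sub_mul_exp (t := t) hr0
  have hup : ‖1 - r * Complex.exp (t * Complex.I)‖ ≤ 2 := by
    refine (norm_sub_le _ _).trans ?_
    rw [norm_one, norm_mul, Complex.norm_real, Complex.norm_exp_ofReal_mul_I, Real.norm_eq_abs]
    linarith [abs_of_nonneg hr0]
  have hpos : 0 < |sin (t / 2)| := abs_pos.2 ht
  rw [← log_abs (sin _)]
  have h1 := log_le_log hpos hlow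
  have h2 := log_le_log (hpos.trans_le hlow) hup
  have h3 : 0 ≤ log 2 := log_nonneg one_le_two
  rw [abs_le]
  constructor <;> cases abs_cases (log |sin (t / 2)|) <;> linarith

lemma intervalIntegrable_log_sin_half (a b : ℝ) :
    IntervalIntegrable (fun t => log (sin (t / 2))) volume a b := by
  simpa [div_eq_inv_mul] using
    (intervalIntegrable_log_sin (a := a / 2) (b := b / 2)).comp_mul_left (c := 2⁻¹)

lemma ae_sin_half_ne_zero : ∀ᵐ t : ℝ, sin (t / 2) ≠ 0 := by
  refine Set.Countable.measure_zero ?_ _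
  refine (Set.countable_range fun n : ℤ => 2 * (n * π)).mono ?_
  intro t ht
  obtain ⟨n, hn⟩ := sin_eq_zero_iff.1 (not_not.1 ht)
  exact ⟨n, by linarith⟩

lemma tendsto_tsum_pow_succ_mul_nhdsLT_one {a : ℕ → ℝ} (ha : Summable a) :
    Tendsto (fun r : ℝ => ∑' n, r ^ (n + 1) * a n) (𝓝[<] 1) (𝓝 (∑' n, a n)) := by
  refine tendsto_tsum_of_dominated_convergence (bound := fun n => |a n|) ha.abs
    (fun n => ?_) ?_
  · simpa using ((continuous_pow (n + 1)).tendsto' 1 1 (one_pow _)).mono_left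
      nhdsWithin_le_nhds |>.mul_const (a n)
  · filter_upwards [Ioo_mem_nhdsLT (zero_lt_one' ℝ)] with r hr n
    rw [norm_mul, norm_pow, Real.norm_eq_abs, Real.norm_eq_abs, abs_of_pos hr.1]
    exact mul_le_of_le_one_left (abs_nonneg _) (pow_le_one₀ hr.1.le hr.2.le)

lemma tendsto_integral_log_norm_one_sub_mul_exp (ω : ℝ) :
    Tendsto (fun r : ℝ => ∫ t in 0..ω, log ‖1 - r * Complex.exp (t * Complex.I)‖) (𝓝[<] 1)
      (𝓝 (∫ t in 0..ω, log (2 * sin (t / 2)))) := by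
  refine intervalIntegral.tendsto_integral_filter_of_dominated_convergence
    (fun t => log 2 + |log (sin (t / 2))|) (Eventually.of_forall fun r =>
      (measurable_log.comp (by fun_prop : Continuous fun t : ℝ =>
        ‖1 - r * Complex.exp (t * Complex.I)‖).measurable).aestronglyMeasurable) ?_
    (intervalIntegrable_const.add (intervalIntegrable_log_sin_half 0 ω).abs) ?_
  · filter_upwards [Ioo_mem_nhdsLT (zero_lt_one' ℝ)] with r hr
    filter_upwards [ae_sin_half_ne_zero] with t ht _
    exact abs_log_norm_one_sub_mul_exp_le hr.1.le hr.2.le ht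
  · filter_upwards [ae_sin_half_ne_zero] with t ht _
    have hlim : Tendsto (fun r : ℝ => ‖1 - r * Complex.exp (t * Complex.I)‖) (𝓝[<] 1)
        (𝓝 |2 * sin (t / 2)|) := by
      rw [← norm_one_sub_exp_mul_I]
      refine Tendsto.mono_left ?_ nhdsWithin_le_nhds
      simpa using (by fun_prop : Continuous fun r : ℝ =>
        ‖1 - r * Complex.exp (t * Complex.I)‖).tendsto 1
    rw [← log_abs]
    exact hlim.log (abs_ne_zero.2 (mul_ne_zero two_ne_zero ht))

theorem stmt_7_general (ω : ℝ) :
    HasSum (fun ℓ : ℕ => Real.sin ((ℓ + 1 : ℝ) * ω) / (ℓ + 1 : ℝ) ^ 2)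
      (-∫ t in (0 : ℝ)..ω, Real.log (2 * Real.sin (t / 2))) := by
  have hsum : Summable fun ℓ : ℕ => sin ((ℓ + 1 : ℝ) * ω) / (ℓ + 1 : ℝ) ^ 2 := by
    refine .of_norm_bounded ((summable_nat_add_iff 1).2 (summable_one_div_nat_pow.2 one_lt_two))
      fun ℓ => ?_
    rw [norm_div, norm_pow, Real.norm_eq_abs, Real.norm_eq_abs,
      abs_of_pos (by positivity : (0 : ℝ) < ℓ + 1)]
    push_cast
    gcongr
    exact abs_sin_le_one _
  have habel : (fun r : ℝ => ∑' ℓ : ℕ, r ^ (ℓ + 1) * (sin ((ℓ + 1) * ω) / (ℓ + 1) ^ 2))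
      =ᶠ[𝓝[<] 1] fun r => -∫ t in 0..ω, log ‖1 - r * Complex.exp (t * Complex.I)‖ := by
    filter_upwards [Ioo_mem_nhdsLT (by norm_num : (-1 : ℝ) < 1)] with r hr
    exact (hasSum_pow_mul_sin_div_sq (abs_lt.2 hr) ω).tsum_eq
  have hlim := tendsto_nhds_unique ((tendsto_tsum_pow_succ_mul_nhdsLT_one hsum).congr' habel)
    (tendsto_integral_log_norm_one_sub_mul_exp ω).neg
  exact hlim ▸ hsum.hasSum

/-- For `0 ≤ ω ≤ 2π`, the series `∑_{ℓ=1}^∞ sin(ℓω)/ℓ²` converges and equals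
the Clausen function `Cl₂(ω) = −∫₀^ω log(2 sin(t/2)) dt`. -/
theorem stmt_7 (ω : ℝ) (h0 : 0 ≤ ω) (h1 : ω ≤ 2 * π) :
    HasSum (fun ℓ : ℕ => Real.sin ((ℓ + 1 : ℝ) * ω) / (ℓ + 1 : ℝ) ^ 2)
      (-∫ t in (0 : ℝ)..ω, Real.log (2 * Real.sin (t / 2))) :=
  stmt_7_general ω
end

section
/- Let (Ω, 𝓕, P) be a probability space and, for each real λ > 0, let n(λ) : Ω → ℕ be a random variable such that for every ℓ ∈ ℕ the function λ ↦ P(n(λ) = ℓ) is measurable and integrable on (0,∞). Let δI : ℕ → ℝ be a bounded sequence satisfying 2·∫₀^∞ P(n(λ) = 0) dλ = δI(0) + 1 and, for every ℓ ≥ 1, ∫₀^∞ P(n(λ) = ℓ) dλ = δI(ℓ) + 1. Then for every complex z with |z| < 1: the function λ ↦ E[z^{n(λ)}] is integrable on (0,∞), the series ∑_{ℓ=1}^∞ z^ℓ δI(ℓ) converges absolutely, and δI(0)/2 + ∑_{ℓ=1}^∞ z^ℓ δI(ℓ) = ∫₀^∞ E[z^{n(λ)}] dλ − (1+z)/(2(1−z)).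 -/
open Filter MeasureTheory

/-! Since `E[z^{n(λ)}] = ∑ zˡ P(n(λ) = ℓ)` and the hypotheses bound the integrals
`∫₀^∞ P(n(λ) = ℓ) dλ` uniformly in `ℓ`, the series `∑ |z|ˡ ∫₀^∞ P(n(λ) = ℓ) dλ` converges; hence
`λ ↦ E[z^{n(λ)}]` is integrable and sum and integral may be exchanged. The constant `1` in
`δI(ℓ) + 1` (halved at `ℓ = 0`) then contributes `1/2 + z/(1 - z) = (1 + z)/(2(1 - z))`. -/

open scoped ENNReal

section SeriesOfIntegrableFunctions

variable {α E : Type*} [MeasurableSpace α] {μ : Measure α} [NormedAddCommGroup E]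

theorem integrable_tsum_of_summable_integral_norm [CompleteSpace E] {F : ℕ → α → E}
    (hF_int : ∀ i, Integrable (F i) μ) (hF_sum : Summable fun i ↦ ∫ a, ‖F i a‖ ∂μ) :
    Integrable (fun a ↦ ∑' i, F i a) μ := by
  have hF_enorm : ∀ i, AEMeasurable (fun a ↦ ‖F i a‖ₑ) μ := fun i ↦ (hF_int i).1.enorm
  have hlint : ∫⁻ a, ∑' i, ‖F i a‖ₑ ∂μ ≠ ∞ := by
    rw [lintegral_tsum hF_enorm,
      ← funext fun i ↦ ofReal_integral_norm_eq_lintegral_enorm (hF_int i),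
      ← ENNReal.ofReal_tsum_of_nonneg (fun i ↦ integral_nonneg fun a ↦ norm_nonneg _) hF_sum]
    exact ENNReal.ofReal_ne_top
  have hsummable : ∀ᵐ a ∂μ, Summable fun i ↦ F i a := by
    filter_upwards [ae_lt_top' (AEMeasurable.tsum hF_enorm) hlint] with a ha
    exact (tsum_enorm_ne_top_iff_summable_norm.1 ha.ne).of_norm
  refine ⟨aestronglyMeasurable_of_tendsto_ae atTop
    (fun N ↦ Finset.aestronglyMeasurable_fun_sum _ fun i _ ↦ (hF_int i).1)
    (hsummable.mono fun a ha ↦ ha.hasSum.tendsto_sum_nat), ?_⟩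
  exact (lintegral_mono fun a ↦ enorm_tsum_le_tsum_enorm).trans_lt hlint.lt_top

variable {𝕜 : Type*} [NontriviallyNormedField 𝕜] [NormedSpace 𝕜 E] {z : 𝕜}

theorem summable_norm_pow_smul_of_norm_le (hz : ‖z‖ < 1) {a : ℕ → E} {B : ℝ}
    (ha : ∀ ℓ, ‖a ℓ‖ ≤ B) : Summable fun ℓ ↦ ‖z ^ ℓ • a ℓ‖ := by
  refine .of_nonneg_of_le (fun ℓ ↦ norm_nonneg _) (fun ℓ ↦ ?_)
    ((summable_geometric_of_lt_one (norm_nonneg z) hz).mul_right B)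
  rw [norm_smul, norm_pow]
  exact mul_le_mul_of_nonneg_left (ha ℓ) (pow_nonneg (norm_nonneg z) ℓ)

theorem summable_integral_norm_pow_smul_of_integral_norm_le (hz : ‖z‖ < 1) {f : ℕ → α → E}
    {C : ℝ} (hC : ∀ ℓ, ∫ a, ‖f ℓ a‖ ∂μ ≤ C) :
    Summable fun ℓ ↦ ∫ a, ‖z ^ ℓ • f ℓ a‖ ∂μ := by
  refine .of_nonneg_of_le (fun ℓ ↦ integral_nonneg fun a ↦ norm_nonneg _) (fun ℓ ↦ ?_)
    ((summable_geometric_of_lt_one (norm_nonneg z) hz).mul_right C)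
  simp_rw [norm_smul, norm_pow]
  rw [integral_const_mul]
  exact mul_le_mul_of_nonneg_left (hC ℓ) (pow_nonneg (norm_nonneg z) ℓ)

end SeriesOfIntegrableFunctions

theorem integral_pow_eq_tsum {Ω 𝕜 : Type*} [MeasurableSpace Ω] [RCLike 𝕜] (P : Measure Ω)
    [IsFiniteMeasure P] {X : Ω → ℕ} (hX : Measurable X) {z : 𝕜} (hz : ‖z‖ ≤ 1) :
    ∫ ω, z ^ X ω ∂P = ∑' k, P.real {ω | X ω = k} • z ^ k := by
  have hint : Integrable (fun k : ℕ ↦ z ^ k) (P.map X) :=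
    .of_bound (measurable_of_countable _).aestronglyMeasurable 1
      (ae_of_all _ fun k ↦ by simpa using pow_le_one₀ (norm_nonneg z) hz)
  rw [← integral_map hX.aemeasurable hint.1, integral_countable hint]
  congr with k
  rw [map_measureReal_apply hX (measurableSet_singleton k)]
  rfl

theorem half_add_tsum_pow_succ_mul_eq {𝕜 : Type*} [RCLike 𝕜] {z : 𝕜} (hz : ‖z‖ < 1)
    {c δ : ℕ → ℝ} (hδ : Summable fun ℓ ↦ ‖z ^ (ℓ + 1) * (δ (ℓ + 1) : 𝕜)‖)
    (h0 : 2 * c 0 = δ 0 + 1) (hc : ∀ ℓ, 1 ≤ ℓ → c ℓ = δ ℓ + 1) :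
    (δ 0 : 𝕜) / 2 + ∑' ℓ, z ^ (ℓ + 1) * (δ (ℓ + 1) : 𝕜)
      = ∑' ℓ, z ^ ℓ • (c ℓ : 𝕜) - (1 + z) / (2 * (1 - z)) := by
  have hgeom : Summable fun ℓ ↦ z ^ (ℓ + 1) :=
    (summable_nat_add_iff 1).2 (summable_geometric_of_norm_lt_one hz)
  have hc_succ : (fun ℓ ↦ z ^ (ℓ + 1) • (c (ℓ + 1) : 𝕜))
      = fun ℓ ↦ z ^ (ℓ + 1) * (δ (ℓ + 1) : 𝕜) + z ^ (ℓ + 1) := by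
    funext ℓ
    rw [hc (ℓ + 1) ℓ.succ_pos, smul_eq_mul]
    push_cast
    ring
  have hc_sum : Summable fun ℓ ↦ z ^ ℓ • (c ℓ : 𝕜) :=
    (summable_nat_add_iff 1).1 (hc_succ ▸ hδ.of_norm.add hgeom)
  have hz1 : 1 - z ≠ 0 := sub_ne_zero.2 fun h ↦ by simp [← h] at hz
  rw [hc_sum.tsum_eq_zero_add, hc_succ, hδ.of_norm.tsum_add hgeom, geom_series_succ z hz,
    tsum_geometric_of_norm_lt_one hz, show (c 0 : 𝕜) = (δ 0 + 1) / 2 by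
      rw [eq_div_iff two_ne_zero, mul_comm]; exact_mod_cast h0]
  field_simp
  ring

theorem stmt_11_general {Ω : Type*} [MeasurableSpace Ω] (P : Measure Ω) [IsProbabilityMeasure P]
    (n : ℝ → Ω → ℕ) (hn : ∀ l : ℝ, Measurable (n l))
    (hint : ∀ ℓ : ℕ, IntegrableOn (fun l : ℝ => (P {ω | n l ω = ℓ}).toReal) (Set.Ioi 0))
    (δI : ℕ → ℝ) (hbdd : ∃ B : ℝ, ∀ ℓ : ℕ, |δI ℓ| ≤ B)
    (h0 : 2 * ∫ l in Set.Ioi (0 : ℝ), (P {ω | n l ω = 0}).toReal = δI 0 + 1)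
    (hℓ : ∀ ℓ : ℕ, 1 ≤ ℓ →
      ∫ l in Set.Ioi (0 : ℝ), (P {ω | n l ω = ℓ}).toReal = δI ℓ + 1)
    (z : ℂ) (hz : ‖z‖ < 1) :
    IntegrableOn (fun l : ℝ => ∫ ω, z ^ n l ω ∂P) (Set.Ioi 0)
    ∧ Summable (fun ℓ : ℕ => ‖z ^ (ℓ + 1) * (δI (ℓ + 1) : ℂ)‖)
    ∧ (δI 0 : ℂ) / 2 + ∑' ℓ : ℕ, z ^ (ℓ + 1) * (δI (ℓ + 1) : ℂ)
        = (∫ l in Set.Ioi (0 : ℝ), ∫ ω, z ^ n l ω ∂P) - (1 + z) / (2 * (1 - z)) := by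
  obtain ⟨B, hB⟩ := hbdd
  have hδ : Summable fun ℓ : ℕ ↦ ‖z ^ (ℓ + 1) * (δI (ℓ + 1) : ℂ)‖ :=
    (summable_nat_add_iff (f := fun ℓ ↦ ‖z ^ ℓ * (δI ℓ : ℂ)‖) 1).2 <|
      summable_norm_pow_smul_of_norm_le hz (a := fun ℓ ↦ (δI ℓ : ℂ))
        fun ℓ ↦ by simpa using hB ℓ
  let p : ℕ → ℝ → ℝ := fun ℓ l ↦ P.real {ω | n l ω = ℓ}
  let c : ℕ → ℝ := fun ℓ ↦ ∫ l in Set.Ioi 0, p ℓ l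
  have hc_le : ∀ ℓ, c ℓ ≤ B + 1 := by
    rintro (_ | ℓ)
    · linarith [show 2 * c 0 = δI 0 + 1 from h0, abs_le.1 (hB 0), abs_nonneg (δI 0)]
    · linarith [show c (ℓ + 1) = δI (ℓ + 1) + 1 from hℓ _ ℓ.succ_pos, abs_le.1 (hB (ℓ + 1))]
  have hE : (fun l ↦ ∫ ω, z ^ n l ω ∂P) = fun l ↦ ∑' ℓ, z ^ ℓ • (p ℓ l : ℂ) := by
    funext l
    rw [integral_pow_eq_tsum P (hn l) hz.le]
    congr with ℓ
    rw [Complex.real_smul, smul_eq_mul, mul_comm]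
  have hF_int : ∀ ℓ, IntegrableOn (fun l ↦ z ^ ℓ • (p ℓ l : ℂ)) (Set.Ioi 0) :=
    fun ℓ ↦ ((hint ℓ).ofReal (𝕜 := ℂ)).const_mul (z ^ ℓ)
  have hF_sum := summable_integral_norm_pow_smul_of_integral_norm_le hz
    (μ := volume.restrict (Set.Ioi 0)) (f := fun ℓ l ↦ (p ℓ l : ℂ))
    fun ℓ ↦ by simpa [p, abs_of_nonneg measureReal_nonneg] using hc_le ℓ
  refine ⟨hE ▸ integrable_tsum_of_summable_integral_norm hF_int hF_sum, hδ, ?_⟩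
  rw [hE, ← integral_tsum_of_summable_integral_norm hF_int hF_sum]
  simp_rw [integral_smul, integral_complex_ofReal]
  exact half_add_tsum_pow_succ_mul_eq hz hδ h0 hℓ

/-- With `(Ω, 𝓕, P)` a probability space, `n(λ) : Ω → ℕ` random variables such
that `λ ↦ P(n(λ) = ℓ)` is measurable and integrable on `(0,∞)` for every `ℓ`, and
`δI : ℕ → ℝ` a bounded sequence with `2∫₀^∞ P(n(λ)=0) dλ = δI(0) + 1` and
`∫₀^∞ P(n(λ)=ℓ) dλ = δI(ℓ) + 1` for `ℓ ≥ 1`, then for every `z ∈ ℂ` with `|z| < 1`: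
`λ ↦ E[z^{n(λ)}]` is integrable on `(0,∞)`, `∑_{ℓ≥1} z^ℓ δI(ℓ)` converges absolutely, and
`δI(0)/2 + ∑_{ℓ≥1} z^ℓ δI(ℓ) = ∫₀^∞ E[z^{n(λ)}] dλ − (1+z)/(2(1−z))`. -/
theorem stmt_11 {Ω : Type*} [MeasurableSpace Ω] (P : Measure Ω) [IsProbabilityMeasure P]
    (n : ℝ → Ω → ℕ) (hn : ∀ l : ℝ, Measurable (n l))
    (hmeas : ∀ ℓ : ℕ, Measurable fun l : ℝ => (P {ω | n l ω = ℓ}).toReal)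
    (hint : ∀ ℓ : ℕ, IntegrableOn (fun l : ℝ => (P {ω | n l ω = ℓ}).toReal) (Set.Ioi 0))
    (δI : ℕ → ℝ) (hbdd : ∃ B : ℝ, ∀ ℓ : ℕ, |δI ℓ| ≤ B)
    (h0 : 2 * ∫ l in Set.Ioi (0 : ℝ), (P {ω | n l ω = 0}).toReal = δI 0 + 1)
    (hℓ : ∀ ℓ : ℕ, 1 ≤ ℓ →
      ∫ l in Set.Ioi (0 : ℝ), (P {ω | n l ω = ℓ}).toReal = δI ℓ + 1)
    (z : ℂ) (hz : ‖z‖ < 1) :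
    IntegrableOn (fun l : ℝ => ∫ ω, z ^ n l ω ∂P) (Set.Ioi 0)
    ∧ Summable (fun ℓ : ℕ => ‖z ^ (ℓ + 1) * (δI (ℓ + 1) : ℂ)‖)
    ∧ (δI 0 : ℂ) / 2 + ∑' ℓ : ℕ, z ^ (ℓ + 1) * (δI (ℓ + 1) : ℂ)
        = (∫ l in Set.Ioi (0 : ℝ), ∫ ω, z ^ n l ω ∂P) - (1 + z) / (2 * (1 - z)) :=
  stmt_11_general P n hn hint δI hbdd h0 hℓ z hz
end

section
/- Let δ : {1, 2, 3, …} → ℝ be a sequence such that δ(ℓ) + 1/(2π²ℓ²) + (3/(2π⁴ℓ⁴))·(log(2πℓ) + γ − 11/6) = o(ℓ⁻⁴) as ℓ → ∞, and let δ(0) ∈ ℝ satisfy the sum rule δ(0) + 2·∑_{ℓ=1}^∞ δ(ℓ) = 0 (the series converging absolutely). Define σ₀(L) = δ(0) + 2·∑_{ℓ=1}^{L−1} δ(ℓ). Then, as L → ∞ along positive integers, L·σ₀(L) = 1/π² + 1/(2π²L) + (1/(π⁴L²))·(log(2πL) + γ + (π² − 9)/6) + o(L⁻²). -/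
/-!
Put `φ(x) = 1/x + 1/(2x²) + 1/(6x³)`, `g(t) = (log 2πt + γ - 11/6)/t⁴` and
`ψ(t) = (log 2πt + γ - 3/2)/(3t³)` (`invSqTail`, `logQuartic`, `logQuarticTail`), so that
`ψ' = -g`. By the sum rule, `σ₀(L) = -2 ∑_{ℓ ≥ L} δ(ℓ)`. Since `1/ℓ² = φ(ℓ) - φ(ℓ+1) + O(ℓ⁻⁶)`, the hypothesis says that
`δ(ℓ) + (φ(ℓ) - φ(ℓ+1))/(2π²) + 3 g(ℓ)/(2π⁴) = o(ℓ⁻⁴)`; its tail sums are `o(L⁻³)`. The `φ`-part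
telescopes to `φ(L)`, and the integral test for the decreasing `g` gives
`ψ(L) ≤ ∑_{ℓ ≥ L} g(ℓ) ≤ ψ(L) + g(L)` with `L g(L) = O(log L / L³)`. What remains is
`L φ(L)/π² + 3 L ψ(L)/π⁴`, which is exactly the claimed expansion.
-/

open Real Filter Asymptotics Topology Set

lemma hasSum_sub_succ_of_tendsto_zero {u : ℕ → ℝ} (hu : ∀ n, u (n + 1) ≤ u n)
    (h : Tendsto u atTop (𝓝 0)) : HasSum (fun n => u n - u (n + 1)) (u 0) := by
  refine (hasSum_iff_tendsto_nat_of_nonneg (fun n => sub_nonneg.2 (hu n)) _).2 ?_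
  simp_rw [Finset.sum_range_sub']
  simpa using tendsto_const_nhds.sub h

theorem AntitoneOn.tsum_nat_add_bounds_of_hasDerivAt {f F : ℝ → ℝ} {a : ℝ}
    (hf : AntitoneOn f (Ici a)) (hf₀ : ∀ t ∈ Ici a, 0 ≤ f t)
    (hF : ∀ t ∈ Ici a, HasDerivAt F (-f t) t) (hF₀ : Tendsto F atTop (𝓝 0)) :
    Summable (fun n : ℕ => f (a + n)) ∧ F a ≤ ∑' n : ℕ, f (a + n) ∧
      ∑' n : ℕ, f (a + n) ≤ f a + F a := by
  have step : ∀ x ∈ Ici a, f (x + 1) ≤ F x - F (x + 1) ∧ F x - F (x + 1) ≤ f x := by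
    intro x hx
    have hx' : ∀ t ∈ Icc x (x + 1), t ∈ Ici a := fun t ht => le_trans hx ht.1
    obtain ⟨c, hc, hslope⟩ := exists_hasDerivAt_eq_slope F (fun t => -f t) (lt_add_one x)
      (fun t ht => (hF t (hx' t ht)).continuousAt.continuousWithinAt)
      (fun t ht => hF t (hx' t (Ioo_subset_Icc_self ht)))
    have hc' : F x - F (x + 1) = f c := by
      rw [add_sub_cancel_left, div_one] at hslope
      linarith
    rw [hc']
    exact ⟨hf (hx' c (Ioo_subset_Icc_self hc)) (hx' _ (right_mem_Icc.2 (by linarith))) hc.2.le,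
      hf hx (hx' c (Ioo_subset_Icc_self hc)) hc.1.le⟩
  have ha : ∀ n : ℕ, a + n ∈ Ici a := fun n =>
    mem_Ici.2 (le_add_of_nonneg_right n.cast_nonneg)
  have hsucc : ∀ n : ℕ, a + ((n + 1 : ℕ) : ℝ) = a + n + 1 := fun n => by push_cast; ring
  have hshift_le :
      ∀ n : ℕ, f (a + ((n + 1 : ℕ) : ℝ)) ≤ F (a + n) - F (a + ((n + 1 : ℕ) : ℝ)) :=
    fun n => hsucc n ▸ (step _ (ha n)).1
  have htel : HasSum (fun n : ℕ => F (a + n) - F (a + ((n + 1 : ℕ) : ℝ))) (F a) := by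
    simpa using hasSum_sub_succ_of_tendsto_zero
      (fun n => sub_nonneg.1 ((hf₀ _ (ha (n + 1))).trans (hshift_le n)))
      (hF₀.comp (tendsto_atTop_add_const_left _ a tendsto_natCast_atTop_atTop))
  have hshift : Summable (fun n : ℕ => f (a + ((n + 1 : ℕ) : ℝ))) :=
    htel.summable.of_nonneg_of_le (fun n => hf₀ _ (ha _)) hshift_le
  have hsum : Summable (fun n : ℕ => f (a + n)) := (summable_nat_add_iff 1).1 hshift
  refine ⟨hsum, hasSum_le (fun n => hsucc n ▸ (step _ (ha n)).2) htel hsum.hasSum, ?_⟩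
  rw [hsum.tsum_eq_zero_add, Nat.cast_zero, add_zero]
  exact add_le_add_right (htel.tsum_eq ▸ hshift.tsum_le_tsum hshift_le htel.summable) _

lemma tsum_inv_pow_nat_add_le (p : ℕ) {x : ℝ} (hx : 0 < x) :
    ∑' n : ℕ, ((x + n) ^ (p + 2))⁻¹ ≤ (x ^ (p + 2))⁻¹ + ((p + 1) * x ^ (p + 1))⁻¹ := by
  have hpos : ∀ t ∈ Ici x, 0 < t := fun t ht => hx.trans_le ht
  refine (AntitoneOn.tsum_nat_add_bounds_of_hasDerivAt
    (F := fun t => ((p + 1) * t ^ (p + 1))⁻¹)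
    (fun s hs t _ hst => inv_anti₀ (pow_pos (hpos s hs) _)
      (pow_le_pow_left₀ (hpos s hs).le hst _))
    (fun t ht => inv_nonneg.2 (pow_nonneg (hpos t ht).le _)) (fun t ht => ?_) ?_).2.2
  · have ht := hpos t ht
    refine (((hasDerivAt_pow (p + 1) t).const_mul ((p : ℝ) + 1)).inv
      (by positivity)).congr_deriv ?_
    push_cast
    field_simp
    ring
  · exact tendsto_inv_atTop_zero.comp
      ((tendsto_pow_atTop (Nat.succ_ne_zero p)).const_mul_atTop (by positivity))

lemma isBigO_tsum_inv_pow_nat_add (p : ℕ) :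
    (fun L : ℕ => ∑' i : ℕ, (((i + L : ℕ) : ℝ) ^ (p + 2))⁻¹) =O[atTop]
      fun L : ℕ => ((L : ℝ) ^ (p + 1))⁻¹ := by
  refine IsBigO.of_bound 2 ?_
  filter_upwards [eventually_ge_atTop 1] with L hL
  have hx : (1 : ℝ) ≤ L := by exact_mod_cast hL
  have hsum := tsum_inv_pow_nat_add_le p (one_pos.trans_le hx)
  have hle1 : ((L : ℝ) ^ (p + 2))⁻¹ ≤ ((L : ℝ) ^ (p + 1))⁻¹ :=
    inv_anti₀ (by positivity) (pow_le_pow_right₀ hx (by omega))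
  have hle2 : (((p : ℝ) + 1) * (L : ℝ) ^ (p + 1))⁻¹ ≤ ((L : ℝ) ^ (p + 1))⁻¹ :=
    inv_anti₀ (by positivity) (le_mul_of_one_le_left (by positivity) (by simp))
  rw [norm_of_nonneg (tsum_nonneg fun i => by positivity), norm_of_nonneg (by positivity)]
  simp only [Nat.cast_add, add_comm _ (L : ℝ)]
  linarith

theorem Asymptotics.IsLittleO.tsum_nat_add {E : Type*} [NormedAddCommGroup E]
    [CompleteSpace E] {f : ℕ → E} {g : ℕ → ℝ} (h : f =o[atTop] g) (hg : Summable g)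
    (hg₀ : ∀ n, 0 ≤ g n) :
    (fun L => ∑' i, f (i + L)) =o[atTop] fun L => ∑' i, g (i + L) := by
  refine isLittleO_iff.2 fun c hc => ?_
  obtain ⟨N, hN⟩ := eventually_atTop.1 (h.bound hc)
  filter_upwards [eventually_ge_atTop N] with L hL
  have htail : HasSum (fun i => c * g (i + L)) (c * ∑' i, g (i + L)) :=
    ((summable_nat_add_iff L).2 hg).hasSum.mul_left c
  rw [Real.norm_of_nonneg (tsum_nonneg fun i => hg₀ _)]
  refine tsum_of_norm_bounded htail fun i => ?_
  simpa [Real.norm_of_nonneg (hg₀ _)] using hN (i + L) (by omega)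

/-- The first three Euler–Maclaurin terms of `∑_{n ≥ t} 1/n²`. -/
noncomputable def invSqTail (t : ℝ) : ℝ := 1 / t + 1 / (2 * t ^ 2) + 1 / (6 * t ^ 3)

lemma invSqTail_sub_invSqTail_add_one {x : ℝ} (hx : 0 < x) :
    invSqTail x - invSqTail (x + 1) = 1 / x ^ 2 + 1 / (6 * x ^ 3 * (x + 1) ^ 3) := by
  unfold invSqTail
  field_simp
  ring

lemma tendsto_invSqTail_atTop : Tendsto invSqTail atTop (𝓝 0) := by
  have h1 := tendsto_inv_atTop_zero (𝕜 := ℝ)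
  have h2 := (tendsto_inv_atTop_zero.comp (tendsto_pow_atTop (α := ℝ) (n := 2) two_ne_zero))
  have h3 := (tendsto_inv_atTop_zero.comp (tendsto_pow_atTop (α := ℝ) (n := 3) three_ne_zero))
  have h := (h1.add (h2.div_const 2)).add (h3.div_const 6)
  simp only [zero_div, add_zero] at h
  refine h.congr fun t => ?_
  simp only [Function.comp_apply, invSqTail]
  ring

lemma hasSum_invSqTail_sub {x : ℝ} (hx : 0 < x) :
    HasSum (fun n : ℕ => invSqTail (x + n) - invSqTail (x + n + 1)) (invSqTail x) := by
  have hpos : ∀ n : ℕ, 0 < x + n := fun n => by positivity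
  have h := hasSum_sub_succ_of_tendsto_zero (u := fun n : ℕ => invSqTail (x + n))
    (fun n => ?_) (tendsto_invSqTail_atTop.comp
      (tendsto_atTop_add_const_left _ x tendsto_natCast_atTop_atTop))
  · simpa [add_assoc] using h
  · have hn := hpos n
    have hstep := invSqTail_sub_invSqTail_add_one hn
    have : 0 < 1 / (x + n) ^ 2 + 1 / (6 * (x + n) ^ 3 * (x + n + 1) ^ 3) := by positivity
    simp only [Nat.cast_add, Nat.cast_one, ← add_assoc]
    linarith

lemma isLittleO_inv_pow_three_mul_add_one_pow_three :
    (fun ℓ : ℕ => ((ℓ : ℝ) ^ 3 * ((ℓ : ℝ) + 1) ^ 3)⁻¹) =o[atTop]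
      fun ℓ : ℕ => ((ℓ : ℝ) ^ 4)⁻¹ := by
  have hsq : (fun ℓ : ℕ => ((ℓ : ℝ) ^ 2)⁻¹) =o[atTop] fun _ => (1 : ℝ) :=
    (isLittleO_one_iff ℝ).2 (tendsto_inv_atTop_zero.comp
      ((tendsto_pow_atTop two_ne_zero).comp tendsto_natCast_atTop_atTop))
  refine IsBigO.trans_isLittleO (g := fun ℓ : ℕ => ((ℓ : ℝ) ^ 4)⁻¹ * ((ℓ : ℝ) ^ 2)⁻¹) ?_
    (by simpa using (isBigO_refl (fun ℓ : ℕ => ((ℓ : ℝ) ^ 4)⁻¹) atTop).mul_isLittleO hsq)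
  refine IsBigO.of_bound 1 ?_
  filter_upwards [eventually_ge_atTop 1] with ℓ hℓ
  have hx : (1 : ℝ) ≤ ℓ := by exact_mod_cast hℓ
  rw [one_mul, norm_of_nonneg (by positivity), norm_of_nonneg (by positivity), ← mul_inv]
  refine inv_anti₀ (by positivity) ?_
  calc (ℓ : ℝ) ^ 4 * (ℓ : ℝ) ^ 2 = (ℓ : ℝ) ^ 3 * (ℓ : ℝ) ^ 3 := by ring
    _ ≤ (ℓ : ℝ) ^ 3 * ((ℓ : ℝ) + 1) ^ 3 := by gcongr; linarith

noncomputable def logQuartic (t : ℝ) : ℝ :=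
  (log (2 * π * t) + eulerMascheroniConstant - 11 / 6) / t ^ 4

noncomputable def logQuarticTail (t : ℝ) : ℝ :=
  (log (2 * π * t) + eulerMascheroniConstant - 3 / 2) / (3 * t ^ 3)

lemma tendsto_log_two_pi_mul_add_div_atTop (c : ℝ) :
    Tendsto (fun t => (log (2 * π * t) + c) / t) atTop (𝓝 0) := by
  have hlog : Tendsto (fun t => log t / t) atTop (𝓝 0) :=
    isLittleO_log_id_atTop.tendsto_div_nhds_zero
  have hconst : Tendsto (fun t => (log (2 * π) + c) / t) atTop (𝓝 0) :=
    tendsto_const_nhds.div_atTop tendsto_id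
  have h := hlog.add hconst
  rw [zero_add] at h
  refine h.congr' ?_
  filter_upwards [eventually_gt_atTop 0] with t ht
  rw [log_mul (by positivity) ht.ne']
  ring

lemma quarter_lt_log_two_pi_mul_add {t : ℝ} (ht : 1 ≤ t) :
    1 / 4 < log (2 * π * t) + eulerMascheroniConstant - 11 / 6 := by
  have h2e : log (2 * exp 1) ≤ log (2 * π * t) :=
    log_le_log (by positivity) (by nlinarith [exp_one_lt_d9, pi_gt_three])
  rw [log_mul two_ne_zero (exp_ne_zero 1), log_exp] at h2e
  linarith [log_two_gt_d9, one_half_lt_eulerMascheroniConstant]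

lemma logQuartic_nonneg {t : ℝ} (ht : 1 ≤ t) : 0 ≤ logQuartic t :=
  div_nonneg (by linarith [quarter_lt_log_two_pi_mul_add ht]) (by positivity)

lemma hasDerivAt_log_two_pi_mul {t : ℝ} (ht : 0 < t) :
    HasDerivAt (fun s => log (2 * π * s)) t⁻¹ t := by
  refine ((hasDerivAt_log (by positivity)).comp t
    ((hasDerivAt_id t).const_mul (2 * π))).congr_deriv ?_
  simp [field]

lemma hasDerivAt_logQuartic {t : ℝ} (ht : 0 < t) :
    HasDerivAt logQuartic
      ((1 - 4 * (log (2 * π * t) + eulerMascheroniConstant - 11 / 6)) / t ^ 5) t := by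
  refine ((((hasDerivAt_log_two_pi_mul ht).add_const eulerMascheroniConstant).sub_const
    (11 / 6)).div (hasDerivAt_pow 4 t) (by positivity)).congr_deriv ?_
  field_simp
  ring

lemma hasDerivAt_logQuarticTail {t : ℝ} (ht : 0 < t) :
    HasDerivAt logQuarticTail (-logQuartic t) t := by
  refine ((((hasDerivAt_log_two_pi_mul ht).add_const eulerMascheroniConstant).sub_const
    (3 / 2)).div ((hasDerivAt_pow 3 t).const_mul 3) (by positivity)).congr_deriv ?_
  unfold logQuartic
  field_simp
  ring

lemma antitoneOn_logQuartic : AntitoneOn logQuartic (Ici 1) := by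
  refine antitoneOn_of_hasDerivWithinAt_nonpos (convex_Ici 1)
    (fun t ht => (hasDerivAt_logQuartic (one_pos.trans_le ht)).continuousAt.continuousWithinAt)
    (fun t ht => (hasDerivAt_logQuartic ?_).hasDerivWithinAt) fun t ht => ?_
  all_goals rw [interior_Ici] at ht
  · exact one_pos.trans (mem_Ioi.1 ht)
  · have := quarter_lt_log_two_pi_mul_add (le_of_lt (mem_Ioi.1 ht))
    exact div_nonpos_of_nonpos_of_nonneg (by linarith)
      (pow_nonneg (by linarith [mem_Ioi.1 ht]) 5)

lemma tendsto_logQuarticTail_atTop : Tendsto logQuarticTail atTop (𝓝 0) := by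
  have h := ((tendsto_log_two_pi_mul_add_div_atTop (eulerMascheroniConstant - 3 / 2)).mul
    (tendsto_inv_atTop_zero.comp (tendsto_pow_atTop (n := 2) two_ne_zero))).div_const 3
  rw [zero_mul, zero_div] at h
  refine h.congr' ?_
  filter_upwards [eventually_gt_atTop 0] with t ht
  simp only [Function.comp_apply, logQuarticTail]
  field_simp
  ring

lemma isLittleO_natCast_mul_logQuartic :
    (fun L : ℕ => (L : ℝ) * logQuartic L) =o[atTop] fun L : ℕ => ((L : ℝ) ^ 2)⁻¹ := by
  have h := ((isLittleO_one_iff ℝ).2 ((tendsto_log_two_pi_mul_add_div_atTop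
    (eulerMascheroniConstant - 11 / 6)).comp tendsto_natCast_atTop_atTop)).mul_isBigO
    (isBigO_refl (fun L : ℕ => ((L : ℝ) ^ 2)⁻¹) atTop)
  simp only [one_mul] at h
  refine h.congr' ?_ EventuallyEq.rfl
  filter_upwards [eventually_gt_atTop 0] with L hL
  have : (L : ℝ) ≠ 0 := by positivity
  simp only [Function.comp_apply, logQuartic]
  field_simp
  ring

lemma logQuartic_tsum_nat_add_bounds {x : ℝ} (hx : 1 ≤ x) :
    Summable (fun n : ℕ => logQuartic (x + n)) ∧
      logQuarticTail x ≤ ∑' n : ℕ, logQuartic (x + n) ∧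
      ∑' n : ℕ, logQuartic (x + n) ≤ logQuartic x + logQuarticTail x :=
  (antitoneOn_logQuartic.mono (Ici_subset_Ici.2 hx)).tsum_nat_add_bounds_of_hasDerivAt
    (fun _ ht => logQuartic_nonneg (hx.trans ht))
    (fun _ ht => hasDerivAt_logQuarticTail (one_pos.trans_le (hx.trans ht)))
    tendsto_logQuarticTail_atTop

lemma isLittleO_natCast_mul_tsum_logQuartic_sub :
    (fun L : ℕ => (L : ℝ) * (∑' n : ℕ, logQuartic (L + n) - logQuarticTail L)) =o[atTop]
      fun L : ℕ => ((L : ℝ) ^ 2)⁻¹ := by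
  refine IsBigO.trans_isLittleO (IsBigO.of_bound 1 ?_) isLittleO_natCast_mul_logQuartic
  filter_upwards [eventually_ge_atTop 1] with L hL
  have hx : (1 : ℝ) ≤ L := by exact_mod_cast hL
  obtain ⟨-, hlo, hhi⟩ := logQuartic_tsum_nat_add_bounds hx
  rw [one_mul, norm_mul, norm_mul]
  gcongr
  rw [norm_of_nonneg (sub_nonneg.2 hlo), norm_of_nonneg (logQuartic_nonneg hx)]
  linarith

lemma mul_invSqTail_add_mul_logQuarticTail {x : ℝ} (hx : x ≠ 0) :
    x / π ^ 2 * invSqTail x + 3 * x / π ^ 4 * logQuarticTail x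
      = 1 / π ^ 2 + 1 / (2 * π ^ 2 * x)
        + 1 / (π ^ 4 * x ^ 2) * (log (2 * π * x) + eulerMascheroniConstant + (π ^ 2 - 9) / 6) := by
  unfold invSqTail logQuarticTail
  field_simp
  ring

section Spacing

variable {δ : ℕ → ℝ}

lemma sum_Ico_eq_neg_two_mul_tsum_nat_add (hδ : Summable fun ℓ : ℕ => δ (ℓ + 1))
    (hrule : δ 0 + 2 * ∑' ℓ : ℕ, δ (ℓ + 1) = 0) {L : ℕ} (hL : 1 ≤ L) :
    δ 0 + 2 * ∑ ℓ ∈ Finset.Ico 1 L, δ ℓ = -2 * ∑' i : ℕ, δ (i + L) := by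
  obtain ⟨K, rfl⟩ := Nat.exists_eq_add_of_le' hL
  have h := hδ.sum_add_tsum_nat_add K
  simp only [add_assoc] at h
  rw [Finset.sum_Ico_eq_sum_range, add_tsub_cancel_right]
  simp only [add_comm 1] at h ⊢
  linarith

/-- `δ` minus its expansion, with `1/ℓ²` replaced by the telescoping `φ(ℓ) - φ(ℓ+1)`. -/
noncomputable def expansionRemainder (δ : ℕ → ℝ) (ℓ : ℕ) : ℝ :=
  δ ℓ + (invSqTail ℓ - invSqTail (ℓ + 1)) / (2 * π ^ 2) + 3 / (2 * π ^ 4) * logQuartic ℓ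

lemma isLittleO_expansionRemainder
    (hasymp : (fun ℓ : ℕ =>
        δ ℓ + 1 / (2 * π ^ 2 * (ℓ : ℝ) ^ 2)
          + (3 / (2 * π ^ 4 * (ℓ : ℝ) ^ 4))
            * (log (2 * π * ℓ) + eulerMascheroniConstant - 11 / 6))
      =o[atTop] fun ℓ : ℕ => ((ℓ : ℝ) ^ 4)⁻¹) :
    expansionRemainder δ =o[atTop] fun ℓ : ℕ => ((ℓ : ℝ) ^ 4)⁻¹ := by
  refine (hasymp.add (isLittleO_inv_pow_three_mul_add_one_pow_three.const_mul_left
    (1 / (12 * π ^ 2)))).congr' ?_ EventuallyEq.rfl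
  filter_upwards [eventually_gt_atTop 0] with ℓ hℓ
  have hx : (0 : ℝ) < ℓ := by exact_mod_cast hℓ
  rw [expansionRemainder, invSqTail_sub_invSqTail_add_one hx, logQuartic]
  field_simp
  ring

lemma hasSum_expansionRemainder_nat_add (hδ : Summable fun ℓ : ℕ => δ (ℓ + 1))
    {L : ℕ} (hL : 1 ≤ L) (hg : Summable fun n : ℕ => logQuartic (L + n)) :
    HasSum (fun i => expansionRemainder δ (i + L))
      (∑' i, δ (i + L) + invSqTail L / (2 * π ^ 2)
        + 3 / (2 * π ^ 4) * ∑' n : ℕ, logQuartic (L + n)) := by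
  have hδL : Summable fun i => δ (i + L) := by
    obtain ⟨K, rfl⟩ := Nat.exists_eq_add_of_le' hL
    simpa [add_assoc] using (summable_nat_add_iff K).2 hδ
  have h := (hδL.hasSum.add ((hasSum_invSqTail_sub (x := L) (by positivity)).div_const
    (2 * π ^ 2))).add (hg.hasSum.mul_left (3 / (2 * π ^ 4)))
  convert h using 2 with i
  simp only [expansionRemainder, Nat.cast_add, add_comm (i : ℝ)]

lemma isLittleO_natCast_mul_tsum_expansionRemainder
    (hasymp : (fun ℓ : ℕ =>
        δ ℓ + 1 / (2 * π ^ 2 * (ℓ : ℝ) ^ 2)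
          + (3 / (2 * π ^ 4 * (ℓ : ℝ) ^ 4))
            * (log (2 * π * ℓ) + eulerMascheroniConstant - 11 / 6))
      =o[atTop] fun ℓ : ℕ => ((ℓ : ℝ) ^ 4)⁻¹) :
    (fun L : ℕ => (L : ℝ) * ∑' i, expansionRemainder δ (i + L)) =o[atTop]
      fun L : ℕ => ((L : ℝ) ^ 2)⁻¹ := by
  have htail := ((isLittleO_expansionRemainder hasymp).tsum_nat_add
    (summable_nat_pow_inv.2 (by norm_num)) fun n => by positivity).trans_isBigO
    (isBigO_tsum_inv_pow_nat_add 2)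
  refine ((isBigO_refl (fun L : ℕ => (L : ℝ)) atTop).mul_isLittleO htail).congr'
    EventuallyEq.rfl ?_
  filter_upwards [eventually_gt_atTop 0] with L hL
  have hx : (L : ℝ) ≠ 0 := by positivity
  field_simp

end Spacing

/-- Let `δ` be a real sequence (on positive integers) with
`δ(ℓ) + 1/(2π²ℓ²) + (3/(2π⁴ℓ⁴))(log(2πℓ) + γ − 11/6) = o(ℓ⁻⁴)` and let `δ(0)` satisfy the
sum rule `δ(0) + 2∑_{ℓ≥1} δ(ℓ) = 0` (absolutely convergent series). With
`σ₀(L) = δ(0) + 2∑_{ℓ=1}^{L−1} δ(ℓ)`, one has, as `L → ∞` along positive integers,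
`L·σ₀(L) = 1/π² + 1/(2π²L) + (1/(π⁴L²))(log(2πL) + γ + (π² − 9)/6) + o(L⁻²)`. -/
theorem stmt_15 (δ : ℕ → ℝ)
    (hasymp : (fun ℓ : ℕ =>
        δ ℓ + 1 / (2 * π ^ 2 * (ℓ : ℝ) ^ 2)
          + (3 / (2 * π ^ 4 * (ℓ : ℝ) ^ 4))
            * (Real.log (2 * π * ℓ) + Real.eulerMascheroniConstant - 11 / 6))
      =o[atTop] fun ℓ : ℕ => ((ℓ : ℝ) ^ 4)⁻¹)
    (hsummable : Summable fun ℓ : ℕ => δ (ℓ + 1))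
    (hrule : δ 0 + 2 * ∑' ℓ : ℕ, δ (ℓ + 1) = 0) :
    (fun L : ℕ =>
        (L : ℝ) * (δ 0 + 2 * ∑ ℓ ∈ Finset.Ico 1 L, δ ℓ)
          - (1 / π ^ 2 + 1 / (2 * π ^ 2 * (L : ℝ))
            + (1 / (π ^ 4 * (L : ℝ) ^ 2))
              * (Real.log (2 * π * L) + Real.eulerMascheroniConstant + (π ^ 2 - 9) / 6)))
      =o[atTop] fun L : ℕ => ((L : ℝ) ^ 2)⁻¹ := by
  refine (((isLittleO_natCast_mul_tsum_expansionRemainder hasymp).const_mul_left (-2)).add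
    (isLittleO_natCast_mul_tsum_logQuartic_sub.const_mul_left (3 / π ^ 4))).congr'
    ?_ EventuallyEq.rfl
  filter_upwards [eventually_ge_atTop 1] with L hL
  have hx : (1 : ℝ) ≤ L := by exact_mod_cast hL
  rw [sum_Ico_eq_neg_two_mul_tsum_nat_add hsummable hrule hL,
    (hasSum_expansionRemainder_nat_add hsummable hL
      (logQuartic_tsum_nat_add_bounds hx).1).tsum_eq,
    ← mul_invSqTail_add_mul_logQuarticTail (by positivity)]
  ring
end

section
/- Let δ : {1, 2, 3, …} → ℝ be a sequence such that δ(ℓ) + 1/(2π²ℓ²) + (3/(2π⁴ℓ⁴))·(log(2πℓ) + γ − 11/6) = o(ℓ⁻⁴) as ℓ → ∞. Then the series C₁ = ∑_{ℓ=1}^∞ ℓ·(δ(ℓ) + 1/(2π²ℓ²)) converges absolutely, and, as L → ∞ along positive integers, σ₁(L) := 2·∑_{ℓ=1}^{L−1} ℓ·δ(ℓ) = −(1/π²)·log L + 2·(C₁ − γ/(2π²)) + 1/(2π²L) + (3/(2π⁴L²))·(log(2πL) + γ + (π² − 24)/18) + o(L⁻²). -/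
/-!
Write `ℓ (δ(ℓ) + 1/(2π²ℓ²)) = ℓ ε(ℓ) - (3/(2π⁴)) (A + log ℓ)/ℓ³`, where `ε(ℓ) = o(ℓ⁻⁴)` is the
hypothesis and `A = log 2π + γ - 11/6`, and
`∑_{ℓ<L} ℓ δ(ℓ) = ∑_{ℓ<L} ℓ (δ(ℓ) + 1/(2π²ℓ²)) - (H_L - 1/L)/(2π²)`. The claim then reduces to
expansions, up to `o(L⁻²)`, of the partial sums of `ℓ ε(ℓ)`, of `(A + log ℓ)/ℓ³` and of `1/ℓ`.
Each comes from one discrete principle: if `a n → c` and `a n - a (n+1) = o(n⁻³)`, then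
`a n - c = o(n⁻²)`, since `1/n³ ≤ 2 (1/n² - 1/(n+1)²)` gives the increments a telescoping
majorant. For `(A + log ℓ)/ℓ³` and for `H_n - log n - 1/(2n) + 1/(12n²)` the increments are
controlled by the Taylor expansion of `log (1 + 1/n)`.
-/

open Real Filter Asymptotics Finset Topology

theorem abs_sub_le_of_abs_sub_succ_le {a b : ℕ → ℝ} {c : ℝ} {L : ℕ}
    (ha : Tendsto a atTop (𝓝 c)) (hb : Tendsto b atTop (𝓝 0))
    (h : ∀ n ≥ L, |a n - a (n + 1)| ≤ b n - b (n + 1)) : |a L - c| ≤ b L := by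
  have hpartial : ∀ j, |a L - a (j + L)| ≤ b L - b (j + L) := by
    intro j
    induction j with
    | zero => simp
    | succ j ih =>
      calc |a L - a (j + 1 + L)|
          ≤ |a L - a (j + L)| + |a (j + L) - a (j + L + 1)| := by
            rw [add_right_comm]; exact abs_sub_le _ _ _
        _ ≤ (b L - b (j + L)) + (b (j + L) - b (j + L + 1)) :=
            add_le_add ih (h _ (Nat.le_add_left _ _))
        _ = b L - b (j + 1 + L) := by rw [add_right_comm]; ring
  have hshift := tendsto_add_atTop_nat L
  simpa using le_of_tendsto_of_tendsto' ((ha.comp hshift).const_sub (a L)).abs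
    ((hb.comp hshift).const_sub (b L)) hpartial

theorem inv_cube_le_two_mul_inv_sq_sub {x : ℝ} (hx : 1 ≤ x) :
    (x ^ 3)⁻¹ ≤ 2 * ((x ^ 2)⁻¹ - ((x + 1) ^ 2)⁻¹) := by
  have hx0 : 0 < x := by linarith
  rw [show 2 * ((x ^ 2)⁻¹ - ((x + 1) ^ 2)⁻¹) = 2 * (2 * x + 1) / (x ^ 2 * (x + 1) ^ 2) by
    field_simp; ring, inv_eq_one_div, div_le_div_iff₀ (by positivity) (by positivity)]
  nlinarith [pow_pos hx0 3, pow_pos hx0 4]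

theorem Filter.Tendsto.isLittleO_sub_of_isLittleO_sub_succ {a : ℕ → ℝ} {c : ℝ}
    (ha : Tendsto a atTop (𝓝 c))
    (hd : (fun n => a n - a (n + 1)) =o[atTop] fun n => ((n : ℝ) ^ 3)⁻¹) :
    (fun n => a n - c) =o[atTop] fun n => ((n : ℝ) ^ 2)⁻¹ := by
  rw [isLittleO_iff]
  intro ε hε
  obtain ⟨N, hN⟩ := eventually_atTop.1 (isLittleO_iff.1 hd (half_pos hε))
  filter_upwards [eventually_ge_atTop (max N 1)] with L hL
  have hb : Tendsto (fun n : ℕ => ε * ((n : ℝ) ^ 2)⁻¹) atTop (𝓝 0) := by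
    simpa [inv_pow] using (tendsto_inv_atTop_nhds_zero_nat.pow 2).const_mul ε
  rw [Real.norm_eq_abs, norm_of_nonneg (by positivity)]
  refine abs_sub_le_of_abs_sub_succ_le ha hb fun n hn => ?_
  have hn1 : (1 : ℝ) ≤ n := by exact_mod_cast (le_max_right N 1).trans (hL.trans hn)
  have hstep := hN n ((le_max_left N 1).trans (hL.trans hn))
  rw [Real.norm_eq_abs, norm_of_nonneg (by positivity)] at hstep
  calc |a n - a (n + 1)| ≤ ε / 2 * ((n : ℝ) ^ 3)⁻¹ := hstep
    _ ≤ ε / 2 * (2 * (((n : ℝ) ^ 2)⁻¹ - (((n : ℝ) + 1) ^ 2)⁻¹)) := by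
        gcongr; exact inv_cube_le_two_mul_inv_sq_sub hn1
    _ = ε * ((n : ℝ) ^ 2)⁻¹ - ε * (((n + 1 : ℕ) : ℝ) ^ 2)⁻¹ := by push_cast; ring

theorem isLittleO_of_abs_le_log_div_pow {g : ℕ → ℝ} {C : ℝ} (p : ℕ)
    (h : ∀ᶠ k in atTop, |g k| ≤ C * (1 + log k) / (k : ℝ) ^ (p + 1)) :
    g =o[atTop] fun k => ((k : ℝ) ^ p)⁻¹ := by
  have hlog : (fun k : ℕ => 1 + log k) =o[atTop] fun k : ℕ => (k : ℝ) := by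
    simpa only [Function.comp_def, id] using ((isLittleO_const_id_atTop (1 : ℝ)).add
      isLittleO_log_id_atTop).comp_tendsto tendsto_natCast_atTop_atTop
  have hmajorant : (fun k : ℕ => C * (1 + log k) / (k : ℝ) ^ (p + 1))
      =o[atTop] fun k => ((k : ℝ) ^ p)⁻¹ := by
    refine ((hlog.mul_isBigO (isBigO_refl (fun k : ℕ => ((k : ℝ) ^ (p + 1))⁻¹) atTop)
      ).const_mul_left C).congr' (Eventually.of_forall fun k => by ring) ?_
    filter_upwards [eventually_ne_atTop 0] with k hk
    field_simp
    ring
  refine (IsBigO.of_bound' (h.mono fun k hk => ?_)).trans_isLittleO hmajorant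
  rw [Real.norm_eq_abs, Real.norm_eq_abs]
  exact hk.trans (le_abs_self _)

theorem abs_add_log_le (B : ℝ) {x : ℝ} (hx : 1 ≤ x) :
    |B + log x| ≤ (|B| + 1) * (1 + log x) := by
  have hlog := log_nonneg hx
  calc |B + log x| ≤ |B| + log x := (abs_add_le _ _).trans_eq (by rw [abs_of_nonneg hlog])
    _ ≤ (|B| + 1) * (1 + log x) := by nlinarith [abs_nonneg B]

theorem abs_log_succ_sub_log_sub_sum_le {x : ℝ} (hx : 2 ≤ x) (n : ℕ) :
    |log (x + 1) - log x - ∑ i ∈ range n, (-1) ^ i / ((i + 1) * x ^ (i + 1))|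
      ≤ 2 / x ^ (n + 1) := by
  have hx0 : 0 < x := by linarith
  have habs : |-x⁻¹| = x⁻¹ := by rw [abs_neg, abs_of_pos (inv_pos.2 hx0)]
  have key := abs_log_sub_add_sum_range_le
    (show |-x⁻¹| < 1 by rw [habs]; exact inv_lt_one_of_one_lt₀ (by linarith)) n
  have hlog : log (1 - -x⁻¹) = log (x + 1) - log x := by
    rw [show (1 : ℝ) - -x⁻¹ = (x + 1) / x by field_simp; ring, log_div (by positivity) hx0.ne']
  have hsum : ∑ i ∈ range n, (-x⁻¹) ^ (i + 1) / (i + 1)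
      = -∑ i ∈ range n, (-1) ^ i / ((i + 1) * x ^ (i + 1)) := by
    rw [← sum_neg_distrib]
    refine sum_congr rfl fun i _ => ?_
    rw [neg_pow, inv_pow, pow_succ]
    field_simp
  have hrem : x⁻¹ ^ (n + 1) / (1 - x⁻¹) ≤ 2 / x ^ (n + 1) := by
    rw [inv_pow, div_le_div_iff₀ (by rw [sub_pos]; exact inv_lt_one_of_one_lt₀ (by linarith))
      (by positivity), inv_mul_cancel₀ (by positivity)]
    have : x⁻¹ ≤ 1 / 2 := by rw [inv_le_comm₀ hx0 (by norm_num)]; linarith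
    linarith
  rw [hsum, hlog, habs] at key
  calc _ = |-∑ i ∈ range n, (-1) ^ i / ((i + 1) * x ^ (i + 1)) + (log (x + 1) - log x)| := by
        ring_nf
    _ ≤ 2 / x ^ (n + 1) := key.trans hrem

theorem abs_harmonic_expansion_step_le {x : ℝ} (hx : 2 ≤ x) :
    |log (x + 1) - log x - 1 / (x + 1) - (1 / (2 * x) - 1 / (12 * x ^ 2))
        + (1 / (2 * (x + 1)) - 1 / (12 * (x + 1) ^ 2))| ≤ 3 / x ^ 4 := by
  have hx0 : 0 < x := by linarith
  have htaylor : |log (x + 1) - log x - (1 / x - 1 / (2 * x ^ 2) + 1 / (3 * x ^ 3))|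
      ≤ 2 / x ^ 4 := by
    convert abs_log_succ_sub_log_sub_sum_le hx 3 using 4
    simp [sum_range_succ]
    ring
  have hrat : 0 ≤ (3 * x + 4) / (12 * x ^ 3 * (x + 1) ^ 2) := by positivity
  have hrat' : (3 * x + 4) / (12 * x ^ 3 * (x + 1) ^ 2) ≤ 1 / x ^ 4 := by
    rw [div_le_div_iff₀ (by positivity) (by positivity)]
    nlinarith [pow_pos hx0 3, pow_pos hx0 4, pow_pos hx0 5]
  calc _ = |(log (x + 1) - log x - (1 / x - 1 / (2 * x ^ 2) + 1 / (3 * x ^ 3)))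
          + (3 * x + 4) / (12 * x ^ 3 * (x + 1) ^ 2)| := by
        congr 1; field_simp; ring
    _ ≤ 2 / x ^ 4 + 1 / x ^ 4 := (abs_add_le _ _).trans
        (add_le_add htaylor (by rw [abs_of_nonneg hrat]; exact hrat'))
    _ = 3 / x ^ 4 := by ring

theorem abs_log_div_cube_expansion_step_le (A : ℝ) {x : ℝ} (hx : 2 ≤ x) :
    |(A + 1 / 2 + log x) / (2 * x ^ 2) - (A + 1 / 2 + log (x + 1)) / (2 * (x + 1) ^ 2)
        - (A + log x) / x ^ 3| ≤ (2 * |A + 1 / 2| + 4) * (1 + log x) / x ^ 4 := by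
  have hx0 : 0 < x := by linarith
  have htaylor : |log (x + 1) - log x - 1 / x| ≤ 2 / x ^ 2 := by
    simpa using abs_log_succ_sub_log_sub_sum_le hx 1
  have hr₁ : (3 * x + 2) / (2 * x ^ 3 * (x + 1) ^ 2) ≤ 2 / x ^ 4 := by
    rw [div_le_div_iff₀ (by positivity) (by positivity)]
    nlinarith [pow_pos hx0 3, pow_pos hx0 4, pow_pos hx0 5]
  have hr₂ : (2 * x + 1) / (2 * x ^ 3 * (x + 1) ^ 2) ≤ 1 / x ^ 4 := by
    rw [div_le_div_iff₀ (by positivity) (by positivity)]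
    nlinarith [pow_pos hx0 3, pow_pos hx0 4, pow_pos hx0 5]
  have hr₃ : 2 / x ^ 2 / (2 * (x + 1) ^ 2) ≤ 1 / x ^ 4 := by
    rw [div_div, div_le_div_iff₀ (by positivity) (by positivity)]
    nlinarith [pow_pos hx0 3, pow_pos hx0 4, pow_pos hx0 5]
  have hlog := abs_add_log_le (A + 1 / 2) (by linarith : (1 : ℝ) ≤ x)
  have hlog₀ : 0 ≤ log x := log_nonneg (by linarith)
  calc _ = |-((A + 1 / 2 + log x) * ((3 * x + 2) / (2 * x ^ 3 * (x + 1) ^ 2)))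
          + (2 * x + 1) / (2 * x ^ 3 * (x + 1) ^ 2)
          - (log (x + 1) - log x - 1 / x) / (2 * (x + 1) ^ 2)| := by
        congr 1; field_simp; ring
    _ ≤ |A + 1 / 2 + log x| * ((3 * x + 2) / (2 * x ^ 3 * (x + 1) ^ 2))
          + (2 * x + 1) / (2 * x ^ 3 * (x + 1) ^ 2)
          + |log (x + 1) - log x - 1 / x| / (2 * (x + 1) ^ 2) := by
        refine (abs_sub _ _).trans (add_le_add ((abs_add_le _ _).trans_eq ?_) ?_)
        · rw [abs_neg, abs_mul,
            abs_of_pos (by positivity : 0 < (3 * x + 2) / (2 * x ^ 3 * (x + 1) ^ 2)),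
            abs_of_pos (by positivity : 0 < (2 * x + 1) / (2 * x ^ 3 * (x + 1) ^ 2))]
        · rw [abs_div, abs_of_pos (by positivity : (0 : ℝ) < 2 * (x + 1) ^ 2)]
    _ ≤ (|A + 1 / 2| + 1) * (1 + log x) * (2 / x ^ 4) + 1 / x ^ 4 + 1 / x ^ 4 := by
        exact add_le_add (add_le_add (mul_le_mul hlog hr₁ (by positivity) (by positivity)) hr₂)
          ((div_le_div_of_nonneg_right htaylor (by positivity)).trans hr₃)
    _ = (2 * (|A + 1 / 2| + 1) * (1 + log x) + 2) / x ^ 4 := by ring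
    _ ≤ (2 * |A + 1 / 2| + 4) * (1 + log x) / x ^ 4 := by
        gcongr; nlinarith [abs_nonneg (A + 1 / 2)]

theorem harmonic_sub_log_sub_isLittleO :
    (fun n : ℕ => (harmonic n : ℝ) - log n - eulerMascheroniConstant
        - (1 / (2 * n) - 1 / (12 * n ^ 2))) =o[atTop] fun n => ((n : ℝ) ^ 2)⁻¹ := by
  have hcorr : Tendsto (fun n : ℕ => 1 / (2 * (n : ℝ)) - 1 / (12 * (n : ℝ) ^ 2)) atTop
      (𝓝 0) := by
    have hinv := tendsto_inv_atTop_nhds_zero_nat (𝕜 := ℝ)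
    simpa using ((hinv.const_mul (1 / 2)).sub ((hinv.pow 2).const_mul (1 / 12))).congr
      fun n => by ring
  have hlim : Tendsto (fun n : ℕ => (harmonic n : ℝ) - log n
      - (1 / (2 * n) - 1 / (12 * n ^ 2))) atTop (𝓝 eulerMascheroniConstant) := by
    simpa using tendsto_harmonic_sub_log.sub hcorr
  refine (hlim.isLittleO_sub_of_isLittleO_sub_succ ?_).congr_left fun n => by ring
  refine isLittleO_of_abs_le_log_div_pow (C := 3) 3 ?_
  filter_upwards [eventually_ge_atTop 2] with n hn
  have hx : (2 : ℝ) ≤ n := by exact_mod_cast hn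
  calc _ = |log (n + 1) - log n - 1 / (n + 1) - (1 / (2 * n) - 1 / (12 * n ^ 2))
        + (1 / (2 * (n + 1)) - 1 / (12 * (n + 1) ^ 2))| := by
        rw [harmonic_succ]; push_cast; ring_nf
    _ ≤ 3 / (n : ℝ) ^ 4 := abs_harmonic_expansion_step_le hx
    _ ≤ 3 * (1 + log n) / (n : ℝ) ^ (3 + 1) := by
        gcongr; linarith [log_nonneg (by linarith : (1 : ℝ) ≤ n)]

theorem isLittleO_sum_range_sub_tsum {g : ℕ → ℝ}
    (hg : g =o[atTop] fun n => ((n : ℝ) ^ 3)⁻¹) :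
    Summable g ∧
      (fun L => ∑ ℓ ∈ range L, g ℓ - ∑' ℓ, g ℓ)
        =o[atTop] fun L => ((L : ℝ) ^ 2)⁻¹ := by
  have hs : Summable g :=
    summable_of_isBigO_nat (Real.summable_nat_pow_inv.2 (by norm_num)) hg.isBigO
  refine ⟨hs, hs.hasSum.tendsto_sum_nat.isLittleO_sub_of_isLittleO_sub_succ ?_⟩
  simpa [sum_range_succ] using hg.neg_left

-- The correction term is `∫_L^∞ (A + log x) / x³ dx`.
theorem isLittleO_sum_range_log_div_cube (A : ℝ) :
    Summable (fun ℓ : ℕ => (A + log ℓ) / (ℓ : ℝ) ^ 3) ∧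
      (fun L : ℕ => ∑ ℓ ∈ range L, (A + log ℓ) / (ℓ : ℝ) ^ 3
          - ∑' ℓ : ℕ, (A + log ℓ) / (ℓ : ℝ) ^ 3
          + (A + 1 / 2 + log L) / (2 * (L : ℝ) ^ 2))
        =o[atTop] fun L => ((L : ℝ) ^ 2)⁻¹ := by
  have hs : Summable (fun ℓ : ℕ => (A + log ℓ) / (ℓ : ℝ) ^ 3) := by
    refine summable_of_isBigO_nat (Real.summable_nat_pow_inv.2 (by norm_num : 1 < 2))
      (isLittleO_of_abs_le_log_div_pow (C := |A| + 1) 2 ?_).isBigO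
    filter_upwards [eventually_ge_atTop 1] with ℓ hℓ
    rw [abs_div, abs_of_nonneg (by positivity : (0 : ℝ) ≤ (ℓ : ℝ) ^ 3)]
    gcongr
    exact abs_add_log_le A (Nat.one_le_cast.2 hℓ)
  have hF : Tendsto (fun L : ℕ => (A + 1 / 2 + log L) / (2 * (L : ℝ) ^ 2)) atTop (𝓝 0) := by
    refine (isLittleO_of_abs_le_log_div_pow (C := |A + 1 / 2| + 1) 1 ?_).trans_tendsto
      (by simpa using tendsto_inv_atTop_nhds_zero_nat)
    filter_upwards [eventually_ge_atTop 1] with L hL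
    have hL1 : (1 : ℝ) ≤ L := by exact_mod_cast hL
    rw [abs_div, abs_of_pos (by positivity : (0 : ℝ) < 2 * (L : ℝ) ^ 2)]
    calc _ ≤ |A + 1 / 2 + log L| / (L : ℝ) ^ 2 := by
          gcongr; nlinarith
      _ ≤ _ := by gcongr; exact abs_add_log_le _ hL1
  refine ⟨hs, ((hs.hasSum.tendsto_sum_nat.add hF).isLittleO_sub_of_isLittleO_sub_succ
    ?_).congr_left fun L => by ring⟩
  refine isLittleO_of_abs_le_log_div_pow (C := 2 * |A + 1 / 2| + 4) 3 ?_
  filter_upwards [eventually_ge_atTop 2] with L hL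
  calc _ = |(A + 1 / 2 + log L) / (2 * (L : ℝ) ^ 2)
        - (A + 1 / 2 + log ((L : ℝ) + 1)) / (2 * ((L : ℝ) + 1) ^ 2)
        - (A + log L) / (L : ℝ) ^ 3| := by
        rw [sum_range_succ]; push_cast; ring_nf
    _ ≤ _ := abs_log_div_cube_expansion_step_le A (by exact_mod_cast hL)

theorem isLittleO_sum_range_sub_tsum_of_log_div_cube {f : ℕ → ℝ} {A c : ℝ}
    (hf : (fun ℓ : ℕ => f ℓ + c * ((A + log ℓ) / (ℓ : ℝ) ^ 3))
      =o[atTop] fun ℓ => ((ℓ : ℝ) ^ 3)⁻¹) :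
    Summable f ∧
      (fun L : ℕ => ∑ ℓ ∈ range L, f ℓ - ∑' ℓ, f ℓ
          - c * ((A + 1 / 2 + log L) / (2 * (L : ℝ) ^ 2)))
        =o[atTop] fun L => ((L : ℝ) ^ 2)⁻¹ := by
  obtain ⟨he, hE⟩ := isLittleO_sum_range_sub_tsum hf
  obtain ⟨hs, hS⟩ := isLittleO_sum_range_log_div_cube A
  have hsf : Summable f := (he.sub (hs.mul_left c)).congr fun ℓ => by ring
  refine ⟨hsf, (hE.sub (hS.const_mul_left c)).congr_left fun L => ?_⟩
  rw [hsf.tsum_add (hs.mul_left c), tsum_mul_left, sum_add_distrib, ← mul_sum]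
  ring

theorem isLittleO_natCast_mul {g : ℕ → ℝ} {p : ℕ}
    (hg : g =o[atTop] fun n => ((n : ℝ) ^ (p + 1))⁻¹) :
    (fun n : ℕ => (n : ℝ) * g n) =o[atTop] fun n => ((n : ℝ) ^ p)⁻¹ := by
  refine ((isBigO_refl (fun n : ℕ => (n : ℝ)) atTop).mul_isLittleO hg).congr'
    EventuallyEq.rfl ?_
  filter_upwards [eventually_ne_atTop 0] with n hn
  field_simp
  ring

theorem sum_range_natCast_inv_eq (L : ℕ) :
    ∑ ℓ ∈ range L, (ℓ : ℝ)⁻¹ = harmonic L - (L : ℝ)⁻¹ := by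
  induction L with
  | zero => simp
  | succ L ih => rw [sum_range_succ, ih, harmonic_succ]; push_cast; ring

theorem sum_Ico_natCast_mul_eq (δ : ℕ → ℝ) (c : ℝ) (L : ℕ) :
    ∑ ℓ ∈ Ico 1 L, (ℓ : ℝ) * δ ℓ
      = ∑ ℓ ∈ range L, (ℓ : ℝ) * (δ ℓ + 1 / (c * (ℓ : ℝ) ^ 2))
        - (harmonic L - (L : ℝ)⁻¹) / c := by
  have hterm (ℓ : ℕ) :
      (ℓ : ℝ) * (δ ℓ + 1 / (c * (ℓ : ℝ) ^ 2)) = ℓ * δ ℓ + (ℓ : ℝ)⁻¹ / c := by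
    rcases eq_or_ne (ℓ : ℝ) 0 with h | h
    · simp [h]
    · field_simp
  rw [sum_congr rfl fun ℓ _ => hterm ℓ, sum_add_distrib, ← sum_div, sum_range_natCast_inv_eq,
    add_sub_cancel_right]
  rcases L with _ | L
  · simp
  · rw [range_eq_Ico, sum_eq_sum_Ico_succ_bot (Nat.succ_pos L)]
    simp

/-- Let `δ` be a real sequence (on positive integers) with
`δ(ℓ) + 1/(2π²ℓ²) + (3/(2π⁴ℓ⁴))(log(2πℓ) + γ − 11/6) = o(ℓ⁻⁴)`. Then
`C₁ = ∑_{ℓ≥1} ℓ(δ(ℓ) + 1/(2π²ℓ²))` converges absolutely, and, as `L → ∞` along positive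
integers, `σ₁(L) := 2∑_{ℓ=1}^{L−1} ℓδ(ℓ) = −(1/π²)log L + 2(C₁ − γ/(2π²)) + 1/(2π²L)
 + (3/(2π⁴L²))(log(2πL) + γ + (π² − 24)/18) + o(L⁻²)`. -/
theorem stmt_16 (δ : ℕ → ℝ)
    (hasymp : (fun ℓ : ℕ =>
        δ ℓ + 1 / (2 * π ^ 2 * (ℓ : ℝ) ^ 2)
          + (3 / (2 * π ^ 4 * (ℓ : ℝ) ^ 4))
            * (Real.log (2 * π * ℓ) + Real.eulerMascheroniConstant - 11 / 6))
      =o[atTop] fun ℓ : ℕ => ((ℓ : ℝ) ^ 4)⁻¹) :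
    Summable (fun ℓ : ℕ =>
      |((ℓ : ℝ) + 1) * (δ (ℓ + 1) + 1 / (2 * π ^ 2 * ((ℓ : ℝ) + 1) ^ 2))|)
    ∧ (fun L : ℕ =>
        2 * ∑ ℓ ∈ Finset.Ico 1 L, (ℓ : ℝ) * δ ℓ
          - (-(1 / π ^ 2) * Real.log L
            + 2 * ((∑' ℓ : ℕ, ((ℓ : ℝ) + 1)
                * (δ (ℓ + 1) + 1 / (2 * π ^ 2 * ((ℓ : ℝ) + 1) ^ 2)))
              - Real.eulerMascheroniConstant / (2 * π ^ 2))
            + 1 / (2 * π ^ 2 * (L : ℝ))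
            + (3 / (2 * π ^ 4 * (L : ℝ) ^ 2))
              * (Real.log (2 * π * L) + Real.eulerMascheroniConstant + (π ^ 2 - 24) / 18)))
        =o[atTop] fun L : ℕ => ((L : ℝ) ^ 2)⁻¹ := by
  have hf : (fun ℓ : ℕ => (ℓ : ℝ) * (δ ℓ + 1 / (2 * π ^ 2 * (ℓ : ℝ) ^ 2))
      + 3 / (2 * π ^ 4) * ((log (2 * π) + eulerMascheroniConstant - 11 / 6 + log ℓ)
        / (ℓ : ℝ) ^ 3)) =o[atTop] fun ℓ => ((ℓ : ℝ) ^ 3)⁻¹ := by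
    refine (isLittleO_natCast_mul hasymp).congr' ?_ EventuallyEq.rfl
    filter_upwards [eventually_ne_atTop 0] with ℓ hℓ
    rw [log_mul (by positivity) (by exact_mod_cast hℓ)]
    field_simp
    ring
  obtain ⟨hsum, hpartial⟩ := isLittleO_sum_range_sub_tsum_of_log_div_cube hf
  refine ⟨by simpa using ((summable_nat_add_iff 1).2 hsum).abs, ?_⟩
  rw [show ∑' ℓ : ℕ, ((ℓ : ℝ) + 1) * (δ (ℓ + 1) + 1 / (2 * π ^ 2 * ((ℓ : ℝ) + 1) ^ 2))
      = ∑' ℓ : ℕ, (ℓ : ℝ) * (δ ℓ + 1 / (2 * π ^ 2 * (ℓ : ℝ) ^ 2)) by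
    rw [hsum.tsum_eq_zero_add]; simp]
  refine ((hpartial.const_mul_left 2).sub
    (harmonic_sub_log_sub_isLittleO.const_mul_left (1 / π ^ 2))).congr' ?_ EventuallyEq.rfl
  filter_upwards [eventually_ne_atTop 0] with L hL
  rw [sum_Ico_natCast_mul_eq δ (2 * π ^ 2),
    log_mul (x := 2 * π) (by positivity) (by exact_mod_cast hL)]
  -- keeps `field_simp` out of the summands
  set f : ℕ → ℝ := fun ℓ => (ℓ : ℝ) * (δ ℓ + 1 / (2 * π ^ 2 * (ℓ : ℝ) ^ 2))
  field_simp
  ring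
end
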